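/- arXiv:0708.0853 — 5 statements merged into one kernel-verified Lean document; each statement's English description precedes it below -/
import Mathlib

section
/- Let G be a group with a finite symmetric generating set S and let (W_t)_{t≥0} be the simple random walk on the Cayley graph of G determined by S. Let X be a Banach space satisfying the p-smoothness inequality with constant S_p for some 1 < p ≤ 2, let π be a homomorphism from G to the group of linear isometric automorphisms of X, and let f ∈ Z¹(G,π) be a 1-cocycle. Then for every t ∈ ℕ, E[‖f(W_t)‖^p] ≤ C_p · t · E[‖f(W₁)‖^p], where C_p = 2^{2p} S_p^p / (2^{p−1} − 1). -/
open MeasureTheory ENNReal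

/-- The word length distance on a group `G` associated to a generating set `S`. -/
noncomputable def wordDist {G : Type*} [Group G] (S : Set G) (x y : G) : ℕ :=
  sInf {n : ℕ | ∃ l : List G, l.length = n ∧ (∀ s ∈ l, s ∈ S) ∧ x⁻¹ * y = l.prod}

/-- `S` is a symmetric generating set of `G`. -/
def IsSymmGenSet {G : Type*} [Group G] (S : Set G) : Prop :=
  (∀ s ∈ S, s⁻¹ ∈ S) ∧ Subgroup.closure S = ⊤

/-- `E[F(W_t)]` for the simple random walk `W_t = σ₁ ⋯ σ_t` on the Cayley graph of `G`
determined by `S`, where the steps `σ_i` are i.i.d. uniform on the finite set `S`: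
the average of `F` over all words of length `t` in `S`. -/
noncomputable def walkExp {G : Type*} [Group G] (S : Finset G) (t : ℕ) (F : G → ℝ) : ℝ :=
  (∑ σ : Fin t → {x // x ∈ S}, F (List.ofFn fun i => (σ i : G)).prod) / (S.card : ℝ) ^ t

open Finset

/-!
Let `μ` be the mean of `f` over `S` and, for a word `w = s₁ ⋯ sₜ`, let
`M(w) = ∑ᵢ π(s₁ ⋯ sᵢ₋₁) (f sᵢ - μ)`. The increments of `M` along the walk have mean zero, so the
smoothness inequality together with conditional Jensen gives
`E‖M(W_t)‖ᵖ ≤ 2 S_pᵖ t E‖f(W₁) - μ‖ᵖ ≤ 2^{p+1} S_pᵖ t E‖f(W₁)‖ᵖ`.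
Since `f(w⁻¹) = -π(w⁻¹) f(w)`, there is the Lyons–Zheng decomposition
`2 f(w) = M(w) - π(w) M(w̄) + μ - π(w) μ` with `w̄ = sₜ⁻¹ ⋯ s₁⁻¹`, in which the drift of `f` has
cancelled; as `S` is symmetric, `w ↦ w̄` preserves the law of `W_t`, so the second martingale term
obeys the same bound. Convexity of `xᵖ` over the three terms gives
`E‖f(W_t)‖ᵖ ≤ 3^{p-1} (4 S_pᵖ t + 1) E‖f(W₁)‖ᵖ`, which is at most `C_p t E‖f(W₁)‖ᵖ` because
`S_pᵖ ≥ 2^{p-1} - 1` (the smoothness inequality at `x = y`) and `3^{p-1} (2^{p+1} - 3) ≤ 4ᵖ`.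
-/

theorem rpow_add_le_two_rpow_mul_add_rpow {p x y : ℝ} (hp : 1 ≤ p) (hx : 0 ≤ x) (hy : 0 ≤ y) :
    (x + y) ^ p ≤ 2 ^ (p - 1) * (x ^ p + y ^ p) := by
  simpa [Fin.sum_univ_two] using
    Real.rpow_sum_le_const_mul_sum_rpow_of_nonneg (univ : Finset (Fin 2)) (f := ![x, y]) hp
      (by simp [Fin.forall_fin_two, hx, hy])

theorem rpow_add_add_le_three_rpow_mul_add_add_rpow {p x y z : ℝ} (hp : 1 ≤ p) (hx : 0 ≤ x)
    (hy : 0 ≤ y) (hz : 0 ≤ z) : (x + y + z) ^ p ≤ 3 ^ (p - 1) * (x ^ p + y ^ p + z ^ p) := by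
  simpa [Fin.sum_univ_three, add_assoc] using
    Real.rpow_sum_le_const_mul_sum_rpow_of_nonneg (univ : Finset (Fin 3)) (f := ![x, y, z]) hp
      (by simp [Fin.forall_fin_succ, hx, hy, hz])

theorem one_add_mul_log_le_rpow {a : ℝ} (ha : 0 < a) (s : ℝ) : 1 + s * Real.log a ≤ a ^ s := by
  rw [Real.rpow_def_of_pos ha]
  linarith [Real.add_one_le_exp (Real.log a * s)]

theorem three_rpow_mul_four_mul_two_rpow_sub_three_le {s : ℝ} (hs0 : 0 ≤ s) (hs1 : s ≤ 1) :
    (3 : ℝ) ^ s * (4 * 2 ^ s - 3) ≤ 4 * 4 ^ s := by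
  have h32 : ((3 : ℝ) / 2) ^ s ≤ 1 + s / 2 := by
    have := rpow_one_add_le_one_add_mul_self (s := 1 / 2) (by norm_num) hs0 hs1
    norm_num at this ⊢
    linarith
  have h34 : 1 - s / 3 ≤ ((3 : ℝ) / 4) ^ s := by
    have hlog : -(1 / 3 : ℝ) ≤ Real.log (3 / 4) := by
      have := Real.one_sub_inv_le_log_of_pos (x := 3 / 4) (by norm_num)
      norm_num at this ⊢
      linarith
    nlinarith [one_add_mul_log_le_rpow (a := 3 / 4) (by norm_num) s]
  have h6 : (3 : ℝ) ^ s * 2 ^ s = 4 ^ s * (3 / 2) ^ s := by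
    rw [← Real.mul_rpow, ← Real.mul_rpow] <;> norm_num
  have h3 : (3 : ℝ) ^ s = 4 ^ s * (3 / 4) ^ s := by
    rw [← Real.mul_rpow] <;> norm_num
  have h4 : (0 : ℝ) < 4 ^ s := by positivity
  calc (3 : ℝ) ^ s * (4 * 2 ^ s - 3) = 4 * (3 ^ s * 2 ^ s) - 3 * 3 ^ s := by ring
    _ ≤ 4 ^ s * (4 * (1 + s / 2) - 3 * (1 - s / 3)) := by
      rw [h6, h3]
      nlinarith [mul_le_mul_of_nonneg_left h32 h4.le, mul_le_mul_of_nonneg_left h34 h4.le]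
    _ ≤ 4 * 4 ^ s := by nlinarith

theorem three_rpow_mul_four_mul_add_one_le {p x : ℝ} (hp1 : 1 < p) (hp2 : p ≤ 2)
    (hx : 2 ^ (p - 1) - 1 ≤ x) :
    3 ^ (p - 1) * (4 * x + 1) ≤ 2 ^ (2 * p) / (2 ^ (p - 1) - 1) * x := by
  set δ : ℝ := 2 ^ (p - 1) - 1
  have hδ : 0 < δ := by
    have : (1 : ℝ) < 2 ^ (p - 1) := Real.one_lt_rpow (by norm_num) (by linarith)
    simp only [δ]
    linarith
  have h4p : (2 : ℝ) ^ (2 * p) = 4 * 4 ^ (p - 1) := by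
    rw [Real.rpow_mul (by norm_num), show (2 : ℝ) ^ (2 : ℝ) = 4 by norm_num,
      ← Real.rpow_one_add' (by norm_num) (by linarith), add_sub_cancel]
  have hcore := three_rpow_mul_four_mul_two_rpow_sub_three_le (s := p - 1) (by linarith)
    (by linarith)
  rw [h4p, div_mul_eq_mul_div, le_div_iff₀ hδ]
  calc 3 ^ (p - 1) * (4 * x + 1) * δ ≤ 3 ^ (p - 1) * (4 * x * δ + x) := by
        have : (0 : ℝ) ≤ 3 ^ (p - 1) := by positivity
        nlinarith
    _ = 3 ^ (p - 1) * (4 * 2 ^ (p - 1) - 3) * x := by simp only [δ]; ring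
    _ ≤ 4 * 4 ^ (p - 1) * x := by gcongr; linarith

theorem ofFn_rev_eq_reverse {α : Type*} {k : ℕ} (g : Fin k → α) :
    List.ofFn (fun i => g i.rev) = (List.ofFn g).reverse := by
  apply List.ext_getElem (by simp)
  intro i h₁ h₂
  simp only [List.getElem_ofFn, Fin.rev, List.getElem_reverse, List.length_ofFn]
  congr 1
  ext
  simp only
  omega

section Words

variable {α M : Type*} [Fintype α] [AddCommMonoid M]

theorem sum_ofFn_succ (F : List α → M) (k : ℕ) :
    ∑ σ : Fin (k + 1) → α, F (List.ofFn σ) = ∑ τ : Fin k → α, ∑ s, F (List.ofFn τ ++ [s]) := by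
  rw [← (Fin.snocEquiv fun _ => α).sum_comp, Fintype.sum_prod_type, sum_comm]
  simp only [Fin.snocEquiv_apply, List.ofFn_succ', Fin.snoc_castSucc, Fin.snoc_last,
    List.concat_eq_append]

theorem sum_ofFn_map_reverse (e : α ≃ α) (F : List α → M) (k : ℕ) :
    ∑ σ : Fin k → α, F ((List.ofFn σ).map e).reverse = ∑ σ : Fin k → α, F (List.ofFn σ) := by
  refine (Fintype.sum_congr _ _ fun σ => ?_).trans
    ((Equiv.arrowCongr Fin.revPerm e).sum_comp fun σ => F (List.ofFn σ))
  simp only [List.map_ofFn, ← ofFn_rev_eq_reverse, Function.comp_def]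
  rfl

end Words

def HasSmoothnessIneq (X : Type*) [NormedAddCommGroup X] (p K : ℝ) : Prop :=
  ∀ x y : X, ‖x + y‖ ^ p + ‖x - y‖ ^ p ≤ 2 * ‖x‖ ^ p + 2 * K * ‖y‖ ^ p

section Averages

variable {ι X : Type*} [Fintype ι] [NormedAddCommGroup X] [NormedSpace ℝ X] {p K : ℝ}

theorem card_mul_norm_average_rpow_le (hp : 1 ≤ p) (v : ι → X) :
    (Fintype.card ι : ℝ) * ‖(Fintype.card ι : ℝ)⁻¹ • ∑ i, v i‖ ^ p ≤ ∑ i, ‖v i‖ ^ p := by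
  rcases isEmpty_or_nonempty ι with hι | hι
  · simp
  have hn : (0 : ℝ) < Fintype.card ι := by exact_mod_cast Fintype.card_pos
  have jensen := Real.rpow_arith_mean_le_arith_mean_rpow univ (fun _ => (Fintype.card ι : ℝ)⁻¹)
    (fun i => ‖v i‖) (by intros; positivity) (by simp [hn.ne']) (by intros; positivity) hp
  rw [← mul_sum, ← mul_sum] at jensen
  calc (Fintype.card ι : ℝ) * ‖(Fintype.card ι : ℝ)⁻¹ • ∑ i, v i‖ ^ p
      ≤ (Fintype.card ι : ℝ) * ((Fintype.card ι : ℝ)⁻¹ * ∑ i, ‖v i‖) ^ p := by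
        rw [norm_smul, Real.norm_of_nonneg (by positivity)]
        gcongr
        exact norm_sum_le _ _
    _ ≤ ∑ i, ‖v i‖ ^ p := by grw [jensen, mul_inv_cancel_left₀ hn.ne']

theorem sum_sub_average_eq_zero (v : ι → X) :
    ∑ i, (v i - (Fintype.card ι : ℝ)⁻¹ • ∑ j, v j) = 0 := by
  rcases isEmpty_or_nonempty ι with hι | hι
  · simp
  rw [sum_sub_distrib, sum_const, card_univ, ← Nat.cast_smul_eq_nsmul ℝ, smul_smul,
    mul_inv_cancel₀ (by positivity), one_smul, sub_self]

theorem sum_norm_sub_average_rpow_le (hp : 1 ≤ p) (v : ι → X) :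
    ∑ i, ‖v i - (Fintype.card ι : ℝ)⁻¹ • ∑ j, v j‖ ^ p ≤ 2 ^ p * ∑ i, ‖v i‖ ^ p := by
  set μ := (Fintype.card ι : ℝ)⁻¹ • ∑ j, v j
  calc ∑ i, ‖v i - μ‖ ^ p ≤ ∑ i, 2 ^ (p - 1) * (‖v i‖ ^ p + ‖μ‖ ^ p) := by
        gcongr with i
        exact (Real.rpow_le_rpow (norm_nonneg _) (norm_sub_le _ _) (by linarith)).trans
          (rpow_add_le_two_rpow_mul_add_rpow hp (norm_nonneg _) (norm_nonneg _))
    _ = 2 ^ (p - 1) * (∑ i, ‖v i‖ ^ p + Fintype.card ι * ‖μ‖ ^ p) := by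
        simp [← mul_sum, sum_add_distrib]
    _ ≤ 2 ^ (p - 1) * (∑ i, ‖v i‖ ^ p + ∑ i, ‖v i‖ ^ p) := by
        grw [card_mul_norm_average_rpow_le hp v]
    _ = 2 ^ p * ∑ i, ‖v i‖ ^ p := by
        rw [← two_mul, ← mul_assoc, ← Real.rpow_add_one two_ne_zero, sub_add_cancel]

theorem HasSmoothnessIneq.two_rpow_sub_one_le [Nontrivial X] (hX : HasSmoothnessIneq X p K)
    (hp : 0 < p) : 2 ^ (p - 1) - 1 ≤ K := by
  obtain ⟨x, hx⟩ := exists_ne (0 : X)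
  have hxp : 0 < ‖x‖ ^ p := Real.rpow_pos_of_pos (norm_pos_iff.mpr hx) p
  have h := hX x x
  rw [← two_smul ℝ x, sub_self, norm_zero, Real.zero_rpow hp.ne', norm_smul, Real.norm_two,
    Real.mul_rpow zero_le_two (norm_nonneg x)] at h
  rw [Real.rpow_sub_one two_ne_zero]
  have : 2 ^ p ≤ 2 + 2 * K := le_of_mul_le_mul_right (by linarith) hxp
  linarith

theorem HasSmoothnessIneq.sum_norm_add_rpow_le (hX : HasSmoothnessIneq X p K) (hp : 1 ≤ p)
    (a : X) (b : ι → X) (hb : ∑ i, b i = 0) :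
    ∑ i, ‖a + b i‖ ^ p ≤ Fintype.card ι * ‖a‖ ^ p + 2 * K * ∑ i, ‖b i‖ ^ p := by
  -- conditional Jensen: `a` is the average of the `a - b i`
  have jensen : (Fintype.card ι : ℝ) * ‖a‖ ^ p ≤ ∑ i, ‖a - b i‖ ^ p := by
    refine le_of_eq_of_le ?_ (card_mul_norm_average_rpow_le hp fun i => a - b i)
    rcases isEmpty_or_nonempty ι with hι | hι
    · simp
    rw [sum_sub_distrib, hb, sub_zero, sum_const, card_univ, ← Nat.cast_smul_eq_nsmul ℝ,
      smul_smul, inv_mul_cancel₀ (by positivity), one_smul]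
  calc ∑ i, ‖a + b i‖ ^ p ≤ ∑ i, (2 * ‖a‖ ^ p + 2 * K * ‖b i‖ ^ p - ‖a - b i‖ ^ p) := by
        gcongr with i
        linarith [hX a (b i)]
    _ = 2 * (Fintype.card ι * ‖a‖ ^ p) + 2 * K * ∑ i, ‖b i‖ ^ p - ∑ i, ‖a - b i‖ ^ p := by
        simp only [sum_sub_distrib, sum_add_distrib, sum_const, card_univ, nsmul_eq_mul,
          mul_sum]
        ring
    _ ≤ Fintype.card ι * ‖a‖ ^ p + 2 * K * ∑ i, ‖b i‖ ^ p := by linarith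

theorem HasSmoothnessIneq.card_mul_sum_norm_rpow_le {α : Type*} [Fintype α] {H : ℝ}
    (hX : HasSmoothnessIneq X p K) (hp : 1 ≤ p) (hK : 0 ≤ K) (M : List α → X) (hM : M [] = 0)
    (hmean : ∀ l, ∑ s, (M (l ++ [s]) - M l) = 0) (hinc : ∀ l, ∑ s, ‖M (l ++ [s]) - M l‖ ^ p ≤ H)
    (k : ℕ) :
    Fintype.card α * ∑ σ : Fin k → α, ‖M (List.ofFn σ)‖ ^ p ≤
      2 * K * k * Fintype.card α ^ k * H := by
  set n : ℝ := (Fintype.card α : ℝ)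
  induction k with
  | zero => simp [hM, Real.zero_rpow (by linarith : p ≠ 0)]
  | succ k ih =>
    have hstep (l : List α) : ∑ s, ‖M (l ++ [s])‖ ^ p ≤ n * ‖M l‖ ^ p + 2 * K * H := by
      have := hX.sum_norm_add_rpow_le hp (M l) _ (hmean l)
      simp only [add_sub_cancel] at this
      grw [this, hinc l]
    calc n * ∑ σ : Fin (k + 1) → α, ‖M (List.ofFn σ)‖ ^ p
        ≤ n * ∑ τ : Fin k → α, (n * ‖M (List.ofFn τ)‖ ^ p + 2 * K * H) := by
          rw [sum_ofFn_succ (fun l => ‖M l‖ ^ p)]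
          gcongr with τ
          exact hstep _
      _ = n * (n * ∑ τ : Fin k → α, ‖M (List.ofFn τ)‖ ^ p) + n ^ (k + 1) * (2 * K * H) := by
          simp only [sum_add_distrib, ← mul_sum, sum_const, card_univ, Fintype.card_fun,
            Fintype.card_fin, nsmul_eq_mul, n]
          push_cast
          ring
      _ ≤ n * (2 * K * k * n ^ k * H) + n ^ (k + 1) * (2 * K * H) := by grw [ih]
      _ = 2 * K * ↑(k + 1) * n ^ (k + 1) * H := by push_cast; ring

end Averages

def IsCocycle {G X : Type*} [Group G] [NormedAddCommGroup X] [NormedSpace ℝ X]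
    (π : G →* (X ≃ₗᵢ[ℝ] X)) (f : G → X) : Prop :=
  ∀ x y : G, f (x * y) = π x (f y) + f x

section Cocycle

variable {G X : Type*} [Group G] [NormedAddCommGroup X] [NormedSpace ℝ X]
  {π : G →* (X ≃ₗᵢ[ℝ] X)} {f : G → X}

theorem map_mul_apply (a b : G) (v : X) : π (a * b) v = π a (π b v) := by
  rw [map_mul]
  rfl

theorem IsCocycle.map_one (hf : IsCocycle π f) : f 1 = 0 := by
  simpa using hf 1 1

theorem IsCocycle.apply_map_inv (hf : IsCocycle π f) (s : G) : π s (f s⁻¹) = -f s := by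
  have := hf s s⁻¹
  rw [mul_inv_cancel, hf.map_one] at this
  exact eq_neg_of_add_eq_zero_left this.symm

variable (π f) (μ : X)

def cocycleMartingale : List G → X
  | [] => 0
  | s :: l => (f s - μ) + π s (cocycleMartingale l)

@[simp] theorem cocycleMartingale_nil : cocycleMartingale π f μ [] = 0 := rfl

@[simp] theorem cocycleMartingale_cons (s : G) (l : List G) :
    cocycleMartingale π f μ (s :: l) = (f s - μ) + π s (cocycleMartingale π f μ l) := rfl

theorem cocycleMartingale_append_singleton (l : List G) (s : G) :
    cocycleMartingale π f μ (l ++ [s]) = cocycleMartingale π f μ l + π l.prod (f s - μ) := by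
  induction l with
  | nil => simp
  | cons a l ih =>
    simp only [List.cons_append, cocycleMartingale_cons, ih, List.prod_cons, map_add,
      map_mul_apply]
    abel

variable {π f}

theorem IsCocycle.add_self_apply_prod (hf : IsCocycle π f) (l : List G) :
    f l.prod + f l.prod = cocycleMartingale π f μ l
      - π l.prod (cocycleMartingale π f μ (l.map (·⁻¹)).reverse) + (μ - π l.prod μ) := by
  induction l with
  | nil => simp [hf.map_one]
  | cons s l ih =>
    have hl : (l.map (·⁻¹)).reverse.prod = l.prod⁻¹ := (List.prod_inv_reverse l).symm
    rw [List.map_cons, List.reverse_cons, cocycleMartingale_append_singleton, hl,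
      List.prod_cons, hf, cocycleMartingale_cons]
    have ih' := congrArg (π s) ih
    simp only [map_add, map_sub] at ih'
    have hinv : π l.prod (π l.prod⁻¹ (f s⁻¹ - μ)) = f s⁻¹ - μ := by
      rw [← map_mul_apply, mul_inv_cancel, π.map_one]
      rfl
    rw [map_mul_apply, map_mul_apply, map_add, map_add, hinv, map_sub, hf.apply_map_inv]
    calc _ = (π s (f l.prod) + π s (f l.prod)) + (f s + f s) := by abel
      _ = _ := by rw [ih']; abel

theorem IsCocycle.two_mul_norm_apply_prod_le (hf : IsCocycle π f) (l : List G) :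
    2 * ‖f l.prod‖ ≤ ‖cocycleMartingale π f μ l‖
      + ‖cocycleMartingale π f μ (l.map (·⁻¹)).reverse‖ + 2 * ‖μ‖ := by
  calc 2 * ‖f l.prod‖ = ‖f l.prod + f l.prod‖ := by
        rw [← two_smul ℝ, norm_smul, Real.norm_two]
    _ = ‖cocycleMartingale π f μ l - π l.prod (cocycleMartingale π f μ (l.map (·⁻¹)).reverse)
          + (μ - π l.prod μ)‖ := by rw [hf.add_self_apply_prod μ l]
    _ ≤ ‖cocycleMartingale π f μ l‖ + ‖π l.prod (cocycleMartingale π f μ (l.map (·⁻¹)).reverse)‖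
          + (‖μ‖ + ‖π l.prod μ‖) := norm_add_le_of_le (norm_sub_le _ _) (norm_sub_le _ _)
    _ = _ := by simp only [LinearIsometryEquiv.norm_map]; ring

end Cocycle

section Walk

variable {G X : Type*} [Group G] [NormedAddCommGroup X] [NormedSpace ℝ X]
  {π : G →* (X ≃ₗᵢ[ℝ] X)} {f : G → X} {S : Finset G} {p K : ℝ}

theorem walkExp_one (F : G → ℝ) : walkExp S 1 F = (∑ s : S, F s) / S.card := by
  rw [walkExp, pow_one, ← (Equiv.funUnique (Fin 1) S).symm.sum_comp]
  simp

theorem HasSmoothnessIneq.card_mul_sum_norm_cocycleMartingale_rpow_le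
    (hX : HasSmoothnessIneq X p K) (hp : 1 ≤ p) (hK : 0 ≤ K) (t : ℕ) :
    S.card * ∑ σ : Fin t → S, ‖cocycleMartingale π f ((S.card : ℝ)⁻¹ • ∑ s : S, f s)
        (List.ofFn fun i => (σ i : G))‖ ^ p ≤
      2 * K * t * S.card ^ t * (2 ^ p * ∑ s : S, ‖f s‖ ^ p) := by
  have hcentred := sum_sub_average_eq_zero fun s : S => f s
  have hbound := sum_norm_sub_average_rpow_le hp fun s : S => f s
  rw [Fintype.card_coe] at hcentred hbound
  have := hX.card_mul_sum_norm_rpow_le (H := 2 ^ p * ∑ s : S, ‖f s‖ ^ p) hp hK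
    (fun l : List S => cocycleMartingale π f ((S.card : ℝ)⁻¹ • ∑ s : S, f s) (l.map (↑)))
    (by simp) (fun l => ?_) (fun l => ?_) t
  · simpa [List.map_ofFn, Function.comp_def] using this
  · simp only [List.map_append, List.map_cons, List.map_nil, cocycleMartingale_append_singleton,
      add_sub_cancel_left, ← map_sum, hcentred, map_zero]
  · simpa only [List.map_append, List.map_cons, List.map_nil, cocycleMartingale_append_singleton,
      add_sub_cancel_left, LinearIsometryEquiv.norm_map] using hbound

theorem HasSmoothnessIneq.card_mul_sum_norm_cocycle_rpow_le (hX : HasSmoothnessIneq X p K)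
    (hp : 1 ≤ p) (hK : 0 ≤ K) (hS : ∀ s ∈ S, s⁻¹ ∈ S) (hf : IsCocycle π f) (t : ℕ) :
    S.card * ∑ σ : Fin t → S, ‖f (List.ofFn fun i => (σ i : G)).prod‖ ^ p ≤
      3 ^ (p - 1) * (4 * K * t + 1) * S.card ^ t * ∑ s : S, ‖f s‖ ^ p := by
  set n : ℝ := (S.card : ℝ)
  set a := ∑ s : S, ‖f s‖ ^ p
  set μ := n⁻¹ • ∑ s : S, f s
  set M := cocycleMartingale π f μ
  let w (σ : Fin t → S) : List G := List.ofFn fun i => (σ i : G)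
  have hM : n * ∑ σ, ‖M (w σ)‖ ^ p ≤ 2 * K * t * n ^ t * (2 ^ p * a) :=
    hX.card_mul_sum_norm_cocycleMartingale_rpow_le hp hK t
  -- `w ↦ (w.map (·⁻¹)).reverse` preserves the uniform measure on words over the symmetric `S`
  have hM_rev : ∑ σ, ‖M ((w σ).map (·⁻¹)).reverse‖ ^ p = ∑ σ, ‖M (w σ)‖ ^ p := by
    have := sum_ofFn_map_reverse ((Equiv.inv G).subtypeEquiv fun s =>
      ⟨hS s, fun h => inv_inv s ▸ hS _ h⟩) (fun l => ‖M (l.map (↑))‖ ^ p) t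
    simpa [w, List.map_ofFn, List.map_reverse, Function.comp_def] using this
  have hμ : n * ‖μ‖ ^ p ≤ a := by
    simpa [n, μ, a] using card_mul_norm_average_rpow_le hp fun s : S => f s
  have hpointwise (σ : Fin t → S) : 2 ^ p * ‖f (w σ).prod‖ ^ p ≤
      3 ^ (p - 1) * (‖M (w σ)‖ ^ p + ‖M ((w σ).map (·⁻¹)).reverse‖ ^ p + 2 ^ p * ‖μ‖ ^ p) := by
    rw [← Real.mul_rpow zero_le_two (norm_nonneg _), ← Real.mul_rpow zero_le_two (norm_nonneg _)]
    exact (Real.rpow_le_rpow (by positivity) (hf.two_mul_norm_apply_prod_le μ (w σ))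
      (by linarith)).trans (rpow_add_add_le_three_rpow_mul_add_add_rpow hp (norm_nonneg _)
      (norm_nonneg _) (by positivity))
  have hcard : ∑ _σ : Fin t → S, (1 : ℝ) = n ^ t := by simp [n]
  have h2p : (0 : ℝ) < 2 ^ p := by positivity
  refine le_of_mul_le_mul_left ?_ h2p
  calc 2 ^ p * (n * ∑ σ, ‖f (w σ).prod‖ ^ p) = n * ∑ σ, 2 ^ p * ‖f (w σ).prod‖ ^ p := by
        rw [mul_sum, mul_sum, mul_sum]; simp only [mul_left_comm]
    _ ≤ n * ∑ σ, 3 ^ (p - 1) *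
          (‖M (w σ)‖ ^ p + ‖M ((w σ).map (·⁻¹)).reverse‖ ^ p + 2 ^ p * ‖μ‖ ^ p) := by
        gcongr ?_ * ?_
        exact sum_le_sum fun σ _ => hpointwise σ
    _ = 3 ^ (p - 1) * (2 * (n * ∑ σ, ‖M (w σ)‖ ^ p) + n ^ t * 2 ^ p * (n * ‖μ‖ ^ p)) := by
        simp only [← mul_sum, sum_add_distrib, hM_rev, ← hcard, sum_const, card_univ,
          nsmul_eq_mul, mul_one]
        ring
    _ ≤ 3 ^ (p - 1) * (2 * (2 * K * t * n ^ t * (2 ^ p * a)) + n ^ t * 2 ^ p * a) := by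
        grw [hM, hμ]
    _ = 2 ^ p * (3 ^ (p - 1) * (4 * K * t + 1) * n ^ t * a) := by ring

theorem HasSmoothnessIneq.walkExp_norm_cocycle_rpow_le (hX : HasSmoothnessIneq X p K)
    (hp : 1 ≤ p) (hK : 0 ≤ K) (hS : ∀ s ∈ S, s⁻¹ ∈ S) (hS₀ : S.Nonempty) (hf : IsCocycle π f)
    (t : ℕ) :
    walkExp S t (fun w => ‖f w‖ ^ p) ≤
      3 ^ (p - 1) * (4 * K * t + 1) * walkExp S 1 (fun w => ‖f w‖ ^ p) := by
  have hn : (0 : ℝ) < S.card := by exact_mod_cast hS₀.card_pos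
  rw [walkExp, walkExp_one, mul_div_assoc', div_le_div_iff₀ (by positivity) hn]
  linarith [hX.card_mul_sum_norm_cocycle_rpow_le hp hK hS hf t]

end Walk

theorem cocycle_walk_growth_general
    {G : Type*} [Group G] (S : Finset G) (hS : IsSymmGenSet (S : Set G))
    {X : Type*} [NormedAddCommGroup X] [NormedSpace ℝ X]
    (p Sp : ℝ) (hp1 : 1 < p) (hp2 : p ≤ 2)
    (hsmooth : ∀ x y : X, ‖x + y‖ ^ p + ‖x - y‖ ^ p ≤ 2 * ‖x‖ ^ p + 2 * Sp ^ p * ‖y‖ ^ p)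
    (π : G →* (X ≃ₗᵢ[ℝ] X)) (f : G → X)
    (hcocycle : ∀ x y : G, f (x * y) = π x (f y) + f x) :
    ∀ t : ℕ, walkExp S t (fun w => ‖f w‖ ^ p) ≤
      (2 ^ (2 * p) * Sp ^ p / (2 ^ (p - 1) - 1)) * t * walkExp S 1 (fun w => ‖f w‖ ^ p) := by
  have hf : IsCocycle π f := hcocycle
  have hX : HasSmoothnessIneq X p (Sp ^ p) := hsmooth
  intro t
  rcases t with _ | t
  · simp [walkExp, hf.map_one, Real.zero_rpow (by linarith : p ≠ 0)]
  rcases subsingleton_or_nontrivial X with _ | _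
  · simp [walkExp, Subsingleton.elim _ (0 : X), Real.zero_rpow (by linarith : p ≠ 0)]
  rcases S.eq_empty_or_nonempty with rfl | hS₀
  · simp [walkExp]
  have hK := hX.two_rpow_sub_one_le (by linarith)
  have hδ : (1 : ℝ) ≤ 2 ^ (p - 1) := Real.one_le_rpow (by norm_num) (by linarith)
  have ht : (1 : ℝ) ≤ ↑(t + 1) := by simp
  calc walkExp S (t + 1) (fun w => ‖f w‖ ^ p)
      ≤ 3 ^ (p - 1) * (4 * (Sp ^ p * ↑(t + 1)) + 1) * walkExp S 1 (fun w => ‖f w‖ ^ p) := by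
        simpa only [mul_assoc] using
          hX.walkExp_norm_cocycle_rpow_le hp1.le (by linarith) hS.1 hS₀ hf (t + 1)
    _ ≤ 2 ^ (2 * p) / (2 ^ (p - 1) - 1) * (Sp ^ p * ↑(t + 1)) *
          walkExp S 1 (fun w => ‖f w‖ ^ p) := by
        refine mul_le_mul_of_nonneg_right ?_ (by rw [walkExp_one]; positivity)
        exact three_rpow_mul_four_mul_add_one_le hp1 hp2 (by nlinarith)
    _ = _ := by ring

/-- If `X` is `p`-smooth with constant `S_p` (`1 < p ≤ 2`) and `f : G → X` is a
`1`-cocycle for an isometric linear action `π` of `G` on `X`, then for every `t ∈ ℕ`,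
`E[‖f(W_t)‖^p] ≤ C_p · t · E[‖f(W₁)‖^p]` with `C_p = 2^{2p} S_p^p / (2^{p-1} - 1)`. -/
theorem cocycle_walk_growth
    {G : Type*} [Group G] (S : Finset G) (hS : IsSymmGenSet (S : Set G))
    {X : Type*} [NormedAddCommGroup X] [NormedSpace ℝ X] [CompleteSpace X]
    (p Sp : ℝ) (hp1 : 1 < p) (hp2 : p ≤ 2) (hSp : 0 < Sp)
    (hsmooth : ∀ x y : X, ‖x + y‖ ^ p + ‖x - y‖ ^ p ≤ 2 * ‖x‖ ^ p + 2 * Sp ^ p * ‖y‖ ^ p)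
    (π : G →* (X ≃ₗᵢ[ℝ] X)) (f : G → X)
    (hcocycle : ∀ x y : G, f (x * y) = π x (f y) + f x) :
    ∀ t : ℕ, walkExp S t (fun w => ‖f w‖ ^ p) ≤
      (2 ^ (2 * p) * Sp ^ p / (2 ^ (p - 1) - 1)) * t * walkExp S 1 (fun w => ‖f w‖ ^ p) :=
  cocycle_walk_growth_general S hS p Sp hp1 hp2 hsmooth π f hcocycle
end

section
/- (Pisier's martingale inequality.) Fix 1 < p ≤ 2 and let X be a Banach space satisfying the p-smoothness inequality with constant S_p. Let (M_k)_{k=0}^n be an X-valued martingale on a probability space with respect to some filtration (each M_k Bochner integrable with E[‖M_k‖^p] < ∞). Then E[‖M_n − M₀‖^p] ≤ (S_p^p / (2^{p−1} − 1)) · Σ_{k=0}^{n−1} E[‖M_{k+1} − M_k‖^p]. -/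
/-!
Let `x` be `m`-measurable and let `d` satisfy `E[d | m] = 0`. By conditional Jensen,
`φ t = E‖x + t • d‖^p` is minimal at `t = 0`, and integrating the smoothness inequality gives
`φ (a + b) + φ (a - b) ≤ 2 φ a + 2 S_p^p E‖d‖^p |b|^p`. Taking `a = b = 2^{-j-1}` compares
`φ (2^{-j})` with `φ (2^{-j-1})`, while `a = 0`, `b = 2^{-j}` and minimality at `0` show that
`2^j (φ (2^{-j}) - φ 0)` decays like `2^{j(1-p)}`. Summing the geometric series of ratio `2^{1-p}`
yields `φ 1 ≤ φ 0 + S_p^p / (2^{p-1} - 1) E‖d‖^p`, and the theorem follows by induction on `n`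
with `x = M n - M 0` and `d = M (n+1) - M n`.
-/

open MeasureTheory ENNReal Filter Topology Finset

theorem le_div_one_sub_of_le_add_mul_pow {u : ℕ → ℝ} {a b r : ℝ} (hr₀ : 0 ≤ r) (hr₁ : r < 1)
    (hstep : ∀ j, u j ≤ u (j + 1) + a * r ^ j) (hdecay : ∀ j, u j ≤ b * r ^ j) :
    u 0 ≤ a / (1 - r) := by
  have htelescope : ∀ N, u 0 ≤ u N + a * ∑ j ∈ range N, r ^ j := by
    intro N
    induction N with
    | zero => simp
    | succ N ih => rw [sum_range_succ]; linarith [hstep N]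
  have hlim : Tendsto (fun N => b * r ^ N + a * ∑ j ∈ range N, r ^ j) atTop
      (𝓝 (b * 0 + a * (1 - r)⁻¹)) :=
    ((tendsto_pow_atTop_nhds_zero_of_lt_one hr₀ hr₁).const_mul b).add
      ((hasSum_geometric_of_lt_one hr₀ hr₁).tendsto_sum_nat.const_mul a)
  simpa [div_eq_mul_inv] using
    ge_of_tendsto' hlim fun N => (htelescope N).trans (by linarith [hdecay N])

theorem apply_one_le_of_isMinOn_of_smooth {f : ℝ → ℝ} {p K : ℝ} (hp : 1 < p)
    (hmin : IsMinOn f Set.univ 0)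
    (hsmooth : ∀ a b, f (a + b) + f (a - b) ≤ 2 * f a + 2 * K * |b| ^ p) :
    f 1 ≤ f 0 + K / (2 ^ (p - 1) - 1) := by
  have hmin' : ∀ t, f 0 ≤ f t := isMinOn_univ_iff.1 hmin
  set r : ℝ := 2 / 2 ^ p with hr
  have h2p : 2 < (2 : ℝ) ^ p := by
    simpa using Real.rpow_lt_rpow_of_exponent_lt (by norm_num : (1 : ℝ) < 2) hp
  have hr₀ : 0 ≤ r := by positivity
  have hr₁ : r < 1 := (div_lt_one (by positivity)).2 h2p
  set h : ℕ → ℝ := fun j => (2⁻¹ : ℝ) ^ j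
  have hscale : ∀ j, (2 : ℝ) ^ j * |h j| ^ p = r ^ j := by
    intro j
    rw [abs_of_nonneg (by positivity), ← Real.rpow_pow_comm (by norm_num),
      Real.inv_rpow (by norm_num), inv_pow, hr, div_pow, div_eq_mul_inv]
  set u : ℕ → ℝ := fun j => 2 ^ j * (f (h j) - f 0)
  have hstep : ∀ j, u j ≤ u (j + 1) + K * r * r ^ j := by
    intro j
    have hhalf : h (j + 1) + h (j + 1) = h j := by simp only [h]; ring
    have hj := hsmooth (h (j + 1)) (h (j + 1))
    rw [hhalf, sub_self] at hj
    calc u j ≤ 2 ^ j * (2 * (f (h (j + 1)) - f 0) + 2 * K * |h (j + 1)| ^ p) :=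
          mul_le_mul_of_nonneg_left (by linarith) (by positivity)
      _ = u (j + 1) + K * (2 ^ (j + 1) * |h (j + 1)| ^ p) := by simp only [u]; ring
      _ = u (j + 1) + K * r * r ^ j := by rw [hscale, pow_succ]; ring
  have hdecay : ∀ j, u j ≤ 2 * K * r ^ j := by
    intro j
    have hj := hsmooth 0 (h j)
    rw [zero_add, zero_sub] at hj
    calc u j ≤ 2 ^ j * (2 * K * |h j| ^ p) :=
          mul_le_mul_of_nonneg_left (by linarith [hmin' (-h j)]) (by positivity)
      _ = 2 * K * r ^ j := by rw [← hscale]; ring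
  have hsum := le_div_one_sub_of_le_add_mul_pow hr₀ hr₁ hstep hdecay
  have hconst : K * r / (1 - r) = K / (2 ^ (p - 1) - 1) := by
    rw [Real.rpow_sub_one two_ne_zero, hr]
    field_simp
  simp only [u, h, pow_zero, one_mul] at hsum
  linarith

section

variable {α : Type*} {m m₀ : MeasurableSpace α} {μ : Measure α}
  {X : Type*} [NormedAddCommGroup X] {p : ℝ}

theorem MeasureTheory.MemLp.integrable_norm_rpow_of_ofReal (hp : 0 < p) {f : α → X}
    (hf : MemLp f (ENNReal.ofReal p) μ) : Integrable (fun a => ‖f a‖ ^ p) μ := by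
  simpa [ENNReal.toReal_ofReal hp.le] using
    hf.integrable_norm_rpow (by simpa using hp) ENNReal.ofReal_ne_top

theorem integral_norm_add_rpow_add_integral_norm_sub_rpow_le (hp : 0 < p) {C : ℝ}
    (hsmooth : ∀ x y : X, ‖x + y‖ ^ p + ‖x - y‖ ^ p ≤ 2 * ‖x‖ ^ p + 2 * C * ‖y‖ ^ p)
    {u v : α → X} (hu : MemLp u (ENNReal.ofReal p) μ) (hv : MemLp v (ENNReal.ofReal p) μ) :
    ∫ a, ‖u a + v a‖ ^ p ∂μ + ∫ a, ‖u a - v a‖ ^ p ∂μ ≤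
      2 * ∫ a, ‖u a‖ ^ p ∂μ + 2 * C * ∫ a, ‖v a‖ ^ p ∂μ := by
  have hadd : Integrable (fun a => ‖u a + v a‖ ^ p) μ :=
    (hu.add hv).integrable_norm_rpow_of_ofReal hp
  have hsub : Integrable (fun a => ‖u a - v a‖ ^ p) μ :=
    (hu.sub hv).integrable_norm_rpow_of_ofReal hp
  have hu' := hu.integrable_norm_rpow_of_ofReal hp
  have hv' := hv.integrable_norm_rpow_of_ofReal hp
  rw [← integral_add hadd hsub, ← integral_const_mul, ← integral_const_mul,
    ← integral_add (hu'.const_mul _) (hv'.const_mul _)]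
  exact integral_mono (hadd.add hsub) ((hu'.const_mul _).add (hv'.const_mul _))
    fun a => hsmooth (u a) (v a)

variable [NormedSpace ℝ X] [CompleteSpace X]

theorem integral_norm_condExp_rpow_le (hm : m ≤ m₀) [SigmaFinite (μ.trim hm)] (hp : 1 ≤ p)
    {f : α → X} (hf : Integrable (fun a => ‖f a‖ ^ p) μ) :
    ∫ a, ‖(μ[f|m]) a‖ ^ p ∂μ ≤ ∫ a, ‖f a‖ ^ p ∂μ := by
  calc ∫ a, ‖(μ[f|m]) a‖ ^ p ∂μ ≤ ∫ a, (μ[fun a => ‖f a‖ ^ p|m]) a ∂μ :=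
        integral_mono_of_nonneg (Eventually.of_forall fun a => by positivity) integrable_condExp
          (Integrable.norm_condExp_rpow_le hp hf)
    _ = ∫ a, ‖f a‖ ^ p ∂μ := integral_condExp hm

theorem integral_norm_rpow_le_integral_norm_add_rpow (hm : m ≤ m₀) [SigmaFinite (μ.trim hm)]
    (hp : 1 ≤ p) {x d : α → X} (hxm : StronglyMeasurable[m] x) (hx : Integrable x μ)
    (hd : Integrable d μ) (hd₀ : μ[d|m] =ᵐ[μ] 0)
    (hxd : Integrable (fun a => ‖x a + d a‖ ^ p) μ) :
    ∫ a, ‖x a‖ ^ p ∂μ ≤ ∫ a, ‖x a + d a‖ ^ p ∂μ := by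
  have hcond : μ[x + d|m] =ᵐ[μ] x := by
    filter_upwards [condExp_add hx hd m, hd₀] with a hadd hzero
    rw [hadd, Pi.add_apply, hzero, condExp_of_stronglyMeasurable hm hxm hx]
    simp
  calc ∫ a, ‖x a‖ ^ p ∂μ = ∫ a, ‖(μ[x + d|m]) a‖ ^ p ∂μ :=
        integral_congr_ae (hcond.mono fun a ha => by simp only [ha])
    _ ≤ ∫ a, ‖x a + d a‖ ^ p ∂μ := integral_norm_condExp_rpow_le hm hp hxd

theorem integral_norm_add_rpow_le_of_condExp_eq_zero [IsFiniteMeasure μ] (hm : m ≤ m₀)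
    (hp : 1 < p) {C : ℝ}
    (hsmooth : ∀ x y : X, ‖x + y‖ ^ p + ‖x - y‖ ^ p ≤ 2 * ‖x‖ ^ p + 2 * C * ‖y‖ ^ p)
    {x d : α → X} (hxm : StronglyMeasurable[m] x) (hx : MemLp x (ENNReal.ofReal p) μ)
    (hd : MemLp d (ENNReal.ofReal p) μ) (hd₀ : μ[d|m] =ᵐ[μ] 0) :
    ∫ a, ‖x a + d a‖ ^ p ∂μ ≤
      ∫ a, ‖x a‖ ^ p ∂μ + C / (2 ^ (p - 1) - 1) * ∫ a, ‖d a‖ ^ p ∂μ := by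
  have hp₀ : 0 < p := by linarith
  have hone : 1 ≤ ENNReal.ofReal p := by simpa using ENNReal.ofReal_le_ofReal hp.le
  set D := ∫ a, ‖d a‖ ^ p ∂μ
  set φ : ℝ → ℝ := fun t => ∫ a, ‖x a + t • d a‖ ^ p ∂μ
  have hmin : IsMinOn φ Set.univ 0 := isMinOn_univ_iff.2 fun t => by
    have htd : μ[t • d|m] =ᵐ[μ] 0 :=
      (condExp_smul t d m).trans (hd₀.mono fun a ha => by simp [ha])
    simpa [φ] using integral_norm_rpow_le_integral_norm_add_rpow hm hp.le hxm
      (hx.integrable hone) ((hd.integrable hone).smul t) htd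
      ((hx.add (hd.const_smul t)).integrable_norm_rpow_of_ofReal hp₀)
  have hsmooth' : ∀ a b, φ (a + b) + φ (a - b) ≤ 2 * φ a + 2 * (C * D) * |b| ^ p := by
    intro a b
    have hab := integral_norm_add_rpow_add_integral_norm_sub_rpow_le hp₀ hsmooth
      (hx.add (hd.const_smul a)) (hd.const_smul b)
    have hscale : ∫ ω, ‖b • d ω‖ ^ p ∂μ = |b| ^ p * D := by
      simp_rw [norm_smul, Real.mul_rpow (norm_nonneg _) (norm_nonneg _), Real.norm_eq_abs]
      exact integral_const_mul _ _
    simp only [Pi.add_apply, Pi.smul_apply, add_assoc, add_sub_assoc, ← add_smul, ← sub_smul,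
      hscale] at hab
    simp only [φ]
    linarith
  have hφ := apply_one_le_of_isMinOn_of_smooth hp hmin hsmooth'
  simp only [φ, one_smul, zero_smul, add_zero] at hφ
  rwa [mul_div_right_comm] at hφ

theorem MeasureTheory.Martingale.condExp_sub_ae_eq_zero {ι : Type*} [Preorder ι]
    {ℱ : Filtration ι m₀} {M : ι → α → X} (hM : Martingale M ℱ μ) {i j : ι} (hij : i ≤ j) :
    μ[M j - M i|ℱ i] =ᵐ[μ] 0 := by
  filter_upwards [condExp_sub (hM.integrable j) (hM.integrable i) (ℱ i), hM.condExp_ae_eq hij,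
    hM.condExp_ae_eq le_rfl] with a hsub hj hi
  rw [hsub, Pi.sub_apply, hj, hi, sub_self, Pi.zero_apply]

end

theorem pisier_martingale_inequality_general
    {Ω : Type*} {m : MeasurableSpace Ω} {μ : Measure Ω} [IsProbabilityMeasure μ]
    {X : Type*} [NormedAddCommGroup X] [NormedSpace ℝ X] [CompleteSpace X]
    (p Sp : ℝ) (hp1 : 1 < p)
    (hsmooth : ∀ x y : X, ‖x + y‖ ^ p + ‖x - y‖ ^ p ≤ 2 * ‖x‖ ^ p + 2 * Sp ^ p * ‖y‖ ^ p)
    (ℱ : Filtration ℕ m) (M : ℕ → Ω → X) (hM : Martingale M ℱ μ)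
    (hint : ∀ k : ℕ, MemLp (M k) (ENNReal.ofReal p) μ) (n : ℕ) :
    ∫ ω, ‖M n ω - M 0 ω‖ ^ p ∂μ ≤
      Sp ^ p / (2 ^ (p - 1) - 1) *
        ∑ k ∈ Finset.range n, ∫ ω, ‖M (k + 1) ω - M k ω‖ ^ p ∂μ := by
  induction n with
  | zero => simp [Real.zero_rpow (by linarith : p ≠ 0)]
  | succ n ih =>
    have hstep := integral_norm_add_rpow_le_of_condExp_eq_zero (ℱ.le n) hp1 hsmooth
      ((hM.stronglyMeasurable n).sub ((hM.stronglyMeasurable 0).mono (ℱ.mono n.zero_le)))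
      ((hint n).sub (hint 0)) ((hint (n + 1)).sub (hint n))
      (hM.condExp_sub_ae_eq_zero n.le_succ)
    simp only [Pi.sub_apply, sub_add_sub_cancel'] at hstep
    rw [sum_range_succ, mul_add]
    linarith

/-- **Pisier's martingale inequality.** If `X` is `p`-smooth with constant `S_p`
(`1 < p ≤ 2`) and `(M_k)_{k=0}^n` is an `X`-valued martingale with `E[‖M_k‖^p] < ∞`, then
`E[‖M_n − M₀‖^p] ≤ (S_p^p / (2^{p−1} − 1)) · Σ_{k<n} E[‖M_{k+1} − M_k‖^p]`. -/
theorem pisier_martingale_inequality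
    {Ω : Type*} {m : MeasurableSpace Ω} {μ : Measure Ω} [IsProbabilityMeasure μ]
    {X : Type*} [NormedAddCommGroup X] [NormedSpace ℝ X] [CompleteSpace X]
    (p Sp : ℝ) (hp1 : 1 < p) (hp2 : p ≤ 2) (hSp : 0 < Sp)
    (hsmooth : ∀ x y : X, ‖x + y‖ ^ p + ‖x - y‖ ^ p ≤ 2 * ‖x‖ ^ p + 2 * Sp ^ p * ‖y‖ ^ p)
    (ℱ : Filtration ℕ m) (M : ℕ → Ω → X) (hM : Martingale M ℱ μ)
    (hint : ∀ k : ℕ, MemLp (M k) (ENNReal.ofReal p) μ) (n : ℕ) :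
    ∫ ω, ‖M n ω - M 0 ω‖ ^ p ∂μ ≤
      Sp ^ p / (2 ^ (p - 1) - 1) *
        ∑ k ∈ Finset.range n, ∫ ω, ‖M (k + 1) ω - M k ω‖ ^ p ∂μ :=
  pisier_martingale_inequality_general p Sp hp1 hsmooth ℱ M hM hint n
end

section
/- Let G be a group with a finite symmetric generating set S and let (W_t)_{t≥0} be the simple random walk on the Cayley graph of G determined by S. Let H be a (real or complex) Hilbert space, π a homomorphism from G to the group of linear isometric automorphisms of H, and f ∈ Z¹(G,π) a 1-cocycle. Then for every t ≥ 1, E[‖f(W_{2t})‖²] ≤ 2·E[‖f(W_t)‖²], and consequently for every k ≥ 0, E[‖f(W_{2^k})‖²] ≤ 2^k · E[‖f(W₁)‖²]. -/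
open MeasureTheory ENNReal

open scoped RealInnerProductSpace

/-!
The cocycle identity and the isometry of `π` give
`‖f (x * y)‖² = ‖f x‖² + ‖f y‖² - 2 ⟪f y, f x⁻¹⟫`.
Write `W_{2t} = X Y` with `X`, `Y` independent copies of `W_t`. Since `S` is symmetric, `X⁻¹` has
the law of `X`, so the cross term has expectation `‖E f(W_t)‖²`, whence
`E‖f(W_{2t})‖² = 2 E‖f(W_t)‖² - 2 ‖E f(W_t)‖² ≤ 2 E‖f(W_t)‖²`; iterating gives the bound at `2^k`.
-/

theorem List.ofFn_comp_rev {α : Type*} {n : ℕ} (f : Fin n → α) :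
    List.ofFn (fun i => f i.rev) = (List.ofFn f).reverse := by
  refine List.ext_getElem (by simp) fun i _ _ => ?_
  simp only [List.getElem_reverse, List.getElem_ofFn, List.length_ofFn]
  congr 1
  ext
  simp only [Fin.val_rev]
  omega

theorem List.prod_ofFn_inv_rev {G : Type*} [Group G] {n : ℕ} (f : Fin n → G) :
    (List.ofFn fun i => (f i.rev)⁻¹).prod = (List.ofFn f).prod⁻¹ := by
  rw [List.prod_inv_reverse, List.ofFn_comp_rev (fun i => (f i)⁻¹), List.map_ofFn]
  rfl

/-- `f ∈ Z¹(G, π)`. -/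
def IsOneCocycle {G H : Type*} [Group G] [NormedAddCommGroup H] [InnerProductSpace ℝ H]
    (π : G →* (H ≃ₗᵢ[ℝ] H)) (f : G → H) : Prop :=
  ∀ x y, f (x * y) = π x (f y) + f x

namespace IsOneCocycle

variable {G H : Type*} [Group G] [NormedAddCommGroup H] [InnerProductSpace ℝ H]
  {π : G →* (H ≃ₗᵢ[ℝ] H)} {f : G → H}

theorem apply_one (hf : IsOneCocycle π f) : f 1 = 0 := by
  simpa using hf 1 1

theorem apply_inv (hf : IsOneCocycle π f) (x : G) : f x⁻¹ = -π x⁻¹ (f x) := by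
  have h := hf x⁻¹ x
  rw [inv_mul_cancel, hf.apply_one] at h
  exact eq_neg_of_add_eq_zero_right h.symm

theorem norm_mul_sq (hf : IsOneCocycle π f) (x y : G) :
    ‖f (x * y)‖ ^ 2 = ‖f x‖ ^ 2 + ‖f y‖ ^ 2 - 2 * ⟪f y, f x⁻¹⟫ := by
  have hinner : ⟪π x (f y), f x⟫ = -⟪f y, f x⁻¹⟫ := by
    rw [hf.apply_inv, inner_neg_right, neg_neg, ← (π x⁻¹).inner_map_map, map_inv,
      LinearIsometryEquiv.coe_inv, LinearIsometryEquiv.symm_apply_apply]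
  rw [hf x y, norm_add_sq_real, LinearIsometryEquiv.norm_map, hinner]
  ring

end IsOneCocycle

section RandomWalk

variable {G : Type*} [Group G] (S : Finset G)

/-- `|S|^t · E[F(W_t)]`, for `F` with values in any additive monoid. -/
noncomputable def walkSum {E : Type*} [AddCommMonoid E] (t : ℕ) (F : G → E) : E :=
  ∑ σ : Fin t → S, F (List.ofFn fun i => (σ i : G)).prod

theorem walkExp_eq_walkSum_div (t : ℕ) (F : G → ℝ) :
    walkExp S t F = walkSum S t F / (S.card : ℝ) ^ t :=
  rfl

variable {E : Type*} [AddCommMonoid E]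

theorem walkSum_add (s t : ℕ) (F : G → E) :
    walkSum S (s + t) F = walkSum S s fun x => walkSum S t fun y => F (x * y) := by
  simp only [walkSum, ← Fintype.sum_prod_type', ← (Fin.appendEquiv s t).sum_comp]
  congr! 2 with σ
  rw [← List.prod_append, ← List.ofFn_fin_append]
  congr 2
  ext i
  refine Fin.addCases (fun i => ?_) (fun i => ?_) i <;> simp [Fin.appendEquiv_apply]

theorem walkSum_comp_inv (hS : ∀ s ∈ S, s⁻¹ ∈ S) (t : ℕ) (F : G → E) :
    walkSum S t (fun x => F x⁻¹) = walkSum S t F := by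
  let reverseInv : (Fin t → S) → (Fin t → S) := fun σ i => ⟨(σ i.rev : G)⁻¹, hS _ (σ i.rev).2⟩
  have hinvol : Function.Involutive reverseInv := fun σ => by
    funext i
    simp [reverseInv]
  refine Fintype.sum_bijective reverseInv hinvol.bijective _ _ fun σ => ?_
  simp only [reverseInv, ← List.prod_ofFn_inv_rev]

end RandomWalk

section CocycleAlongWalk

variable {G H : Type*} [Group G] [NormedAddCommGroup H] [InnerProductSpace ℝ H]
  {π : G →* (H ≃ₗᵢ[ℝ] H)} {f : G → H} (S : Finset G)

theorem walkSum_inner_left (t : ℕ) (F : G → H) (v : H) :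
    ⟪walkSum S t F, v⟫ = walkSum S t fun x => ⟪F x, v⟫ :=
  sum_inner _ _ _

theorem walkSum_inner_right (t : ℕ) (F : G → H) (v : H) :
    ⟪v, walkSum S t F⟫ = walkSum S t fun x => ⟪v, F x⟫ :=
  inner_sum _ _ _

theorem walkSum_norm_cocycle_sq_add_self (hS : ∀ s ∈ S, s⁻¹ ∈ S) (hf : IsOneCocycle π f)
    (t : ℕ) :
    walkSum S (t + t) (‖f ·‖ ^ 2)
      = 2 * S.card ^ t * walkSum S t (‖f ·‖ ^ 2) - 2 * ‖walkSum S t f‖ ^ 2 := by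
  have hcross : (walkSum S t fun x => walkSum S t fun y => ⟪f y, f x⁻¹⟫)
      = ‖walkSum S t f‖ ^ 2 := by
    simp only [← walkSum_inner_left, ← walkSum_inner_right, walkSum_comp_inv S hS,
      real_inner_self_eq_norm_sq]
  rw [walkSum_add, ← hcross]
  simp only [hf.norm_mul_sq, walkSum, Finset.sum_add_distrib, Finset.sum_sub_distrib,
    ← Finset.mul_sum, Finset.sum_const, Finset.card_univ, Fintype.card_fun, Fintype.card_coe,
    Fintype.card_fin, nsmul_eq_mul]
  push_cast
  ring

theorem walkExp_norm_cocycle_sq_two_mul_le (hS : ∀ s ∈ S, s⁻¹ ∈ S) (hf : IsOneCocycle π f)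
    (t : ℕ) :
    walkExp S (2 * t) (‖f ·‖ ^ 2) ≤ 2 * walkExp S t (‖f ·‖ ^ 2) := by
  set N : ℝ := (S.card : ℝ) ^ t
  have hN : 0 ≤ N := by positivity
  rw [walkExp_eq_walkSum_div, walkExp_eq_walkSum_div, two_mul t,
    walkSum_norm_cocycle_sq_add_self S hS hf, pow_add]
  calc (2 * N * walkSum S t (‖f ·‖ ^ 2) - 2 * ‖walkSum S t f‖ ^ 2) / (N * N)
      ≤ 2 * N * walkSum S t (‖f ·‖ ^ 2) / (N * N) := by
        gcongr
        exact sub_le_self _ (by positivity)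
    _ = 2 * (walkSum S t (‖f ·‖ ^ 2) / N) := by
      -- `N = 0` happens for `S = ∅`; both sides are then `0` because `x / 0 = 0`.
      rcases hN.eq_or_lt with hN0 | hNpos
      · simp [← hN0]
      · field_simp

end CocycleAlongWalk

/-- For a `1`-cocycle `f` of `G` on a Hilbert space `H` one has
`E[‖f(W_{2t})‖²] ≤ 2·E[‖f(W_t)‖²]` for all `t ≥ 1`, and consequently
`E[‖f(W_{2^k})‖²] ≤ 2^k·E[‖f(W₁)‖²]` for all `k ≥ 0`. -/
theorem hilbert_cocycle_doubling
    {G : Type*} [Group G] (S : Finset G) (hS : IsSymmGenSet (S : Set G))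
    {H : Type*} [NormedAddCommGroup H] [InnerProductSpace ℝ H]
    (π : G →* (H ≃ₗᵢ[ℝ] H)) (f : G → H)
    (hcocycle : ∀ x y : G, f (x * y) = π x (f y) + f x) :
    (∀ t : ℕ, 1 ≤ t →
      walkExp S (2 * t) (fun w => ‖f w‖ ^ 2) ≤ 2 * walkExp S t (fun w => ‖f w‖ ^ 2)) ∧
    (∀ k : ℕ,
      walkExp S (2 ^ k) (fun w => ‖f w‖ ^ 2) ≤ 2 ^ k * walkExp S 1 (fun w => ‖f w‖ ^ 2)) := by
  have doubling (t : ℕ) := walkExp_norm_cocycle_sq_two_mul_le S hS.1 hcocycle t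
  refine ⟨fun t _ => doubling t, fun k => ?_⟩
  induction k with
  | zero => simp
  | succ k ih =>
    calc walkExp S (2 ^ (k + 1)) (fun w => ‖f w‖ ^ 2)
        ≤ 2 * walkExp S (2 ^ k) (fun w => ‖f w‖ ^ 2) := pow_succ' 2 k ▸ doubling (2 ^ k)
      _ ≤ 2 * (2 ^ k * walkExp S 1 (fun w => ‖f w‖ ^ 2)) := by gcongr
      _ = 2 ^ (k + 1) * walkExp S 1 (fun w => ‖f w‖ ^ 2) := by ring
end

section
/- There exists a constant D ≥ 1 such that for every n ≥ 1, the cyclic lamplighter group C₂≀C_n (with the word metric ρ from its canonical generating set, where C₂ is generated by its nonidentity element and C_n by {±1}) admits an embedding f : C₂≀C_n → L₁ satisfying ρ(u,v) ≤ ‖f(u)−f(v)‖₁ ≤ D·ρ(u,v) for all u,v ∈ C₂≀C_n. In particular, the groups C₂≀C_n embed into L₁ with distortion bounded independently of n. -/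
open MeasureTheory ENNReal

/-- There is a Lipschitz embedding of `(G, d)` into an `L_p` space with compression `α`. -/
def HasCompressionLp {G : Type*} (p : ℝ≥0∞) (d : G → G → ℕ) (α : ℝ) : Prop :=
  ∃ (Ω : Type) (_ : MeasurableSpace Ω) (μ : Measure Ω) (f : G → Lp ℝ p μ) (c C : ℝ),
    0 < c ∧ 0 < C ∧
      (∀ x y : G, x ≠ y → c * (d x y : ℝ) ^ α ≤ ‖f x - f y‖) ∧
      (∀ x y : G, ‖f x - f y‖ ≤ C * (d x y : ℝ))

/-- The `L_p` compression exponent `α_p^*` of `(G, d)`; for `p = 2` this is the Hilbert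
compression exponent `α^*`. -/
noncomputable def compressionExp {G : Type*} (p : ℝ≥0∞) (d : G → G → ℕ) : ℝ :=
  sSup {α : ℝ | 0 ≤ α ∧ HasCompressionLp p d α}
/-- The (restricted) wreath product `G ≀ H`: pairs `(f, x)` of a finitely supported function
`f : H → G` and an element `x ∈ H`, with product `(f,x)(g,y) = (z ↦ f(z)g(x⁻¹z), xy)`. -/
@[ext]
structure Wreath (G H : Type*) [One G] where
  toFun : H → G
  pos : H
  finsupp : (Function.mulSupport toFun).Finite

namespace Wreath

variable {G H : Type*} [Group G] [Group H]

instance : One (Wreath G H) :=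
  ⟨⟨fun _ => 1, 1, by
    have : Function.mulSupport (fun _ : H => (1 : G)) = ∅ :=
      Function.mulSupport_eq_empty_iff.mpr rfl
    rw [this]; exact Set.finite_empty⟩⟩

instance : Mul (Wreath G H) :=
  ⟨fun a b =>
    ⟨fun z => a.toFun z * b.toFun (a.pos⁻¹ * z), a.pos * b.pos, by
      have h2 : (Function.mulSupport fun z => b.toFun (a.pos⁻¹ * z)).Finite := by
        have : (Function.mulSupport fun z => b.toFun (a.pos⁻¹ * z)) =
            (fun z : H => a.pos⁻¹ * z) ⁻¹' Function.mulSupport b.toFun :=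
          Function.mulSupport_comp_eq_preimage _ _
        rw [this]
        exact b.finsupp.preimage (mul_right_injective a.pos⁻¹).injOn
      exact (a.finsupp.union h2).subset (Function.mulSupport_mul _ _)⟩⟩

instance : Inv (Wreath G H) :=
  ⟨fun a =>
    ⟨fun z => (a.toFun (a.pos * z))⁻¹, a.pos⁻¹, by
      have : (Function.mulSupport fun z => (a.toFun (a.pos * z))⁻¹) =
          (fun z : H => a.pos * z) ⁻¹' Function.mulSupport a.toFun := by
        ext z
        simp only [Function.mem_mulSupport, ne_eq, inv_eq_one, Set.mem_preimage]
      rw [this]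
      exact a.finsupp.preimage (mul_right_injective a.pos).injOn⟩⟩

@[simp] lemma mul_toFun (a b : Wreath G H) :
    (a * b).toFun = fun z => a.toFun z * b.toFun (a.pos⁻¹ * z) := rfl

@[simp] lemma mul_pos' (a b : Wreath G H) : (a * b).pos = a.pos * b.pos := rfl

@[simp] lemma one_toFun : (1 : Wreath G H).toFun = fun _ => (1 : G) := rfl

@[simp] lemma one_pos' : (1 : Wreath G H).pos = (1 : H) := rfl

@[simp] lemma inv_toFun (a : Wreath G H) :
    (a⁻¹).toFun = fun z => (a.toFun (a.pos * z))⁻¹ := rfl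

@[simp] lemma inv_pos' (a : Wreath G H) : (a⁻¹).pos = a.pos⁻¹ := rfl

instance : Group (Wreath G H) where
  mul_assoc a b c := by
    refine Wreath.ext ?_ ?_
    · funext z; simp [mul_assoc, mul_inv_rev]
    · simp [mul_assoc]
  one_mul a := by
    refine Wreath.ext ?_ ?_
    · funext z; simp
    · simp
  mul_one a := by
    refine Wreath.ext ?_ ?_
    · funext z; simp
    · simp
  inv_mul_cancel a := by
    refine Wreath.ext ?_ ?_
    · funext z; simp
    · simp

end Wreath

open Classical in
/-- The canonical generating set of the wreath product `G ≀ H` associated with a generating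
set `S` of `G` and a generating set `T` of `H`: the elements `(𝟙, t)` for `t ∈ T` and
`(δ_s, e_H)` for `s ∈ S`, where `δ_s` takes the value `s` at `e_H` and `e_G` elsewhere. -/
noncomputable def wreathGens {G H : Type*} [Group G] [Group H] (S : Set G) (T : Set H) :
    Set (Wreath G H) :=
  {w | w.toFun = (fun _ => 1) ∧ w.pos ∈ T} ∪
    {w | w.pos = 1 ∧ ∃ s ∈ S, w.toFun = fun z => if z = 1 then s else 1}

/-- The generating set `{±1}` of the (multiplicative) group of integers. -/
def zGens : Set (Multiplicative ℤ) :=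
  {Multiplicative.ofAdd 1, Multiplicative.ofAdd (-1)}

/-- The generating set of the cyclic group `C₂` consisting of its nonidentity element. -/
def c2Gens : Set (Multiplicative (ZMod 2)) := {Multiplicative.ofAdd 1}

/-- The generating set `{±1}` of the cyclic group `C_n`. -/
def cycGens (n : ℕ) : Set (Multiplicative (ZMod n)) :=
  {Multiplicative.ofAdd 1, Multiplicative.ofAdd (-1)}

/-!
Cutting the cycle at a point `c` turns it into a path. For the lamplighter over a path, record
for each end of the path and each length `t` the lamp pattern on the `t` sites next to that end,
provided the cursor has not entered them; these indicators embed it into `ℓ₁`. Averaging over the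
`n` cut points gives the embedding. A generator changes the indicators of every cut in `O(1)`
places, except for one cut where it changes `O(n)` of them, so the average is Lipschitz. For the
lower bound, for every single cut the indicators of `u` and `v` differ in at least
`2 d(cursor u, cursor v)` places and in at least `max(M, 1)` places, where `M` is the distance from
the cursor of `u` to the farthest lamp on which `u` and `v` differ; a zigzag tour of length at most
`6M + 2 + d(cursor u, cursor v)` shows that this controls the word metric.
-/

section WordMetric

variable {G : Type*} [Group G] {S : Set G}

lemma wordDist_le_length {x y : G} (l : List G) (hS : ∀ s ∈ l, s ∈ S) (h : x⁻¹ * y = l.prod) :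
    wordDist S x y ≤ l.length :=
  Nat.sInf_le ⟨l, rfl, hS, h⟩

lemma norm_sub_mul_prod_le {E : Type*} [SeminormedAddCommGroup E] {F : G → E} {K : ℝ}
    (hF : ∀ w, ∀ s ∈ S, ‖F w - F (w * s)‖ ≤ K) (w : G) (l : List G) (hl : ∀ s ∈ l, s ∈ S) :
    ‖F w - F (w * l.prod)‖ ≤ K * l.length := by
  induction l generalizing w with
  | nil => simp
  | cons s l ih =>
    rw [List.prod_cons, ← mul_assoc, List.length_cons, Nat.cast_succ, mul_add_one, add_comm]
    calc ‖F w - F (w * s * l.prod)‖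
        ≤ ‖F w - F (w * s)‖ + ‖F (w * s) - F (w * s * l.prod)‖ :=
          norm_sub_le_norm_sub_add_norm_sub _ _ _
      _ ≤ K + K * l.length :=
        add_le_add (hF w s (hl s List.mem_cons_self))
          (ih (w * s) fun t ht => hl t (List.mem_cons_of_mem s ht))

lemma norm_sub_le_mul_wordDist {E : Type*} [SeminormedAddCommGroup E] {F : G → E} {K : ℝ}
    (hF : ∀ w, ∀ s ∈ S, ‖F w - F (w * s)‖ ≤ K) {x y : G}
    (hxy : ∃ l : List G, (∀ s ∈ l, s ∈ S) ∧ x⁻¹ * y = l.prod) :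
    ‖F x - F y‖ ≤ K * wordDist S x y := by
  obtain ⟨l, hl, hS, hprod⟩ := Nat.sInf_mem (s := {m | ∃ l : List G, l.length = m ∧
    (∀ s ∈ l, s ∈ S) ∧ x⁻¹ * y = l.prod}) (by
      obtain ⟨l, hS, h⟩ := hxy
      exact ⟨l.length, l, rfl, hS, h⟩)
  have hy : y = x * l.prod := by rw [← hprod, mul_inv_cancel_left]
  rw [wordDist, ← hl, hy]
  exact norm_sub_mul_prod_le hF x l hS

end WordMetric

lemma norm_toLp_count {Ω : Type*} [Fintype Ω] [MeasurableSpace Ω] [DiscreteMeasurableSpace Ω]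
    (g : Ω → ℝ) :
    ‖(MemLp.of_discrete (f := g) (p := 1) (μ := Measure.count)).toLp g‖ = ∑ ω, |g ω| := by
  rw [Lp.norm_toLp, eLpNorm_one_eq_lintegral_enorm, lintegral_count, tsum_fintype,
    ENNReal.toReal_sum fun _ _ => enorm_ne_top]
  simp [Real.norm_eq_abs]

lemma sum_abs_ite_sub_ite {X : Type*} [Fintype X] [DecidableEq X] (x y : X) (a b : ℝ) :
    ∑ ξ, |(if ξ = x then a else 0) - (if ξ = y then b else 0)| =
      if x = y then |a - b| else |a| + |b| := by
  split_ifs with hxy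
  · subst hxy
    calc _ = ∑ ξ, if ξ = x then |a - b| else 0 :=
          Finset.sum_congr rfl fun ξ _ => by split_ifs <;> simp
      _ = |a - b| := by simp
  · calc _ = ∑ ξ, ((if ξ = x then |a| else 0) + if ξ = y then |b| else 0) :=
          Finset.sum_congr rfl fun ξ _ => by
            by_cases hx : ξ = x <;> by_cases hy : ξ = y <;> simp_all
      _ = |a| + |b| := by simp [Finset.sum_add_distrib]

lemma sum_le_card_mul_of_eq_zero {ι : Type*} [Fintype ι] {f : ι → ℝ} {C : ℝ} (S : Finset ι)
    (hC : ∀ i, f i ≤ C) (h0 : ∀ i ∉ S, f i = 0) : ∑ i, f i ≤ S.card * C := by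
  rw [← Finset.sum_subset (Finset.subset_univ S) fun i _ hi => h0 i hi, ← nsmul_eq_mul]
  exact Finset.sum_le_card_nsmul S f C fun i _ => hC i

namespace ZMod

variable {n : ℕ}

/-- The graph distance from `0` in the `n`-cycle. -/
def cycNorm (z : ZMod n) : ℕ := z.valMinAbs.natAbs

@[simp] lemma cycNorm_zero : cycNorm (0 : ZMod n) = 0 := by simp [cycNorm]

lemma cycNorm_add_le (x y : ZMod n) : cycNorm (x + y) ≤ cycNorm x + cycNorm y :=
  (natAbs_valMinAbs_add_le x y).trans (Int.natAbs_add_le _ _)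

lemma cycNorm_sub_le (x y z : ZMod n) : cycNorm (x - z) ≤ cycNorm (x - y) + cycNorm (y - z) := by
  simpa using cycNorm_add_le (x - y) (y - z)

def routeCost : ZMod n → List (ZMod n) → ZMod n → ℕ
  | a, [], p => cycNorm (p - a)
  | a, q :: Q, p => cycNorm (q - a) + routeCost q Q p

lemma routeCost_le_cycNorm_add (a b : ZMod n) (Q : List (ZMod n)) (p : ZMod n) :
    routeCost a Q p ≤ cycNorm (b - a) + routeCost b Q p := by
  cases Q with
  | nil => exact cycNorm_sub_le p b a |>.trans_eq (add_comm _ _)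
  | cons q Q =>
    have := cycNorm_sub_le q b a
    simp only [routeCost]
    omega

lemma routeCost_mono {l Q : List (ZMod n)} (h : l.Sublist Q) (a p : ZMod n) :
    routeCost a l p ≤ routeCost a Q p := by
  induction h generalizing a with
  | slnil => exact le_rfl
  | cons q _ ih => exact (ih a).trans (routeCost_le_cycNorm_add a q _ p)
  | cons_cons q _ ih => exact Nat.add_le_add_left (ih q) _

lemma routeCost_le_of_isChain (a : ZMod n) (Q : List (ZMod n)) (p : ZMod n)
    (h : (a :: Q).IsChain fun x y => cycNorm (y - x) ≤ 1) :
    routeCost a Q p ≤ Q.length + cycNorm (p - Q.getLastD a) := by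
  induction Q generalizing a with
  | nil => simp [routeCost]
  | cons q Q ih =>
    obtain ⟨hq, hQ⟩ := List.isChain_cons_cons.mp h
    have := ih q hQ
    simp only [routeCost, List.length_cons, List.getLastD_cons]
    omega

section

variable [NeZero n]

lemma cycNorm_intCast_le (m : ℤ) : cycNorm (m : ZMod n) ≤ m.natAbs :=
  natAbs_min_of_le_div_two n _ _ (by rw [coe_valMinAbs]) (natAbs_valMinAbs_le _)

lemma cycNorm_sub_le_dist (a b : ZMod n) : cycNorm (a - b) ≤ Nat.dist a.val b.val := by
  have h := cycNorm_intCast_le (n := n) ((a.val : ℤ) - b.val)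
  push_cast [natCast_zmod_val] at h
  exact h.trans (by simp only [Nat.dist]; omega)

lemma card_cycNorm_sub_le (a : ZMod n) (M : ℕ) :
    (Finset.univ.filter fun q : ZMod n => cycNorm (q - a) ≤ M).card ≤ 2 * M + 1 := by
  calc (Finset.univ.filter fun q : ZMod n => cycNorm (q - a) ≤ M).card
      ≤ ((Finset.Icc (-(M : ℤ)) M).image fun k : ℤ => a + k).card := by
        refine Finset.card_le_card fun q hq => Finset.mem_image.mpr
          ⟨(q - a).valMinAbs, ?_, by rw [coe_valMinAbs, add_sub_cancel]⟩
        have : (q - a).valMinAbs.natAbs ≤ M := (Finset.mem_filter.mp hq).2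
        rw [Finset.mem_Icc]; omega
    _ ≤ 2 * M + 1 := Finset.card_image_le.trans (by simp; omega)

lemma sub_le_sum_of_one_le {F : ZMod n → ℝ} (h0 : ∀ z, 0 ≤ F z)
    {a b : ℕ} (hb : b ≤ n) (H : ∀ z : ZMod n, a ≤ z.val → z.val < b → 1 ≤ F z) :
    ((b - a : ℕ) : ℝ) ≤ ∑ z, F z := by
  set T := Finset.univ.filter fun z : ZMod n => a ≤ z.val ∧ z.val < b
  have hcard : b - a ≤ T.card := by
    rw [← Nat.card_Ico]
    refine Finset.card_le_card_of_injOn (Nat.cast : ℕ → ZMod n) (fun s hs => ?_) ?_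
    · have hs := Finset.mem_Ico.mp hs
      simp [T, val_cast_of_lt (hs.2.trans_le hb), hs]
    · intro s hs s' hs' h
      have hs := Finset.mem_Ico.mp hs
      have hs' := Finset.mem_Ico.mp hs'
      rw [← val_cast_of_lt (hs.2.trans_le hb), h, val_cast_of_lt (hs'.2.trans_le hb)]
  calc ((b - a : ℕ) : ℝ) ≤ T.card • (1 : ℝ) := by rw [nsmul_one]; exact_mod_cast hcard
    _ ≤ ∑ z ∈ T, F z := Finset.card_nsmul_le_sum T F 1 fun z hz => by
        simp only [T, Finset.mem_filter] at hz; exact H z hz.2.1 hz.2.2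
    _ ≤ ∑ z, F z := Finset.sum_le_sum_of_subset_of_nonneg (Finset.subset_univ T)
        fun z _ _ => h0 z

end

end ZMod

def zigzag (M s : ℕ) : ℤ := if s ≤ M then s else 2 * M - s

lemma natAbs_zigzag_succ_sub (M s : ℕ) : (zigzag M (s + 1) - zigzag M s).natAbs = 1 := by
  unfold zigzag; split_ifs <;> omega

lemma exists_zigzag_eq {M : ℕ} {k : ℤ} (hk : k.natAbs ≤ M) : ∃ s ≤ 3 * M, zigzag M s = k := by
  rcases le_or_gt 0 k with h | h
  · exact ⟨k.toNat, by omega, by unfold zigzag; split_ifs <;> omega⟩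
  · exact ⟨2 * M + k.natAbs, by omega, by unfold zigzag; split_ifs <;> omega⟩

open Multiplicative ZMod

abbrev Lamplighter (n : ℕ) := Wreath (Multiplicative (ZMod 2)) (Multiplicative (ZMod n))

namespace Lamplighter

variable {n : ℕ}

def lamps (u : Lamplighter n) (s : ZMod n) : ZMod 2 := toAdd (u.toFun (ofAdd s))

def cursor (u : Lamplighter n) : ZMod n := toAdd u.pos

lemma ext_iff' {u v : Lamplighter n} : u = v ↔ lamps u = lamps v ∧ cursor u = cursor v := by
  refine ⟨fun h => h ▸ ⟨rfl, rfl⟩, fun ⟨h1, h2⟩ => Wreath.ext (funext fun z => ?_) h2⟩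
  exact congrFun h1 (toAdd z)

def move (p : ZMod n) : Lamplighter n := ⟨fun _ => 1, ofAdd p, by simp⟩

def toggle : Lamplighter n :=
  ⟨fun z => if z = 1 then ofAdd 1 else 1, 1,
    (Set.finite_singleton 1).subset fun _ hz => by_contra fun h => hz (if_neg h)⟩

@[simp] lemma lamps_mul_move (u : Lamplighter n) (p : ZMod n) :
    lamps (u * move p) = lamps u :=
  funext fun _ => congrArg toAdd (mul_one _)

@[simp] lemma cursor_mul_move (u : Lamplighter n) (p : ZMod n) :
    cursor (u * move p) = cursor u + p := rfl

lemma lamps_mul_toggle (u : Lamplighter n) :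
    lamps (u * toggle) = lamps u + Pi.single (cursor u) 1 := by
  funext s
  change toAdd (u.toFun (ofAdd s) * if u.pos⁻¹ * ofAdd s = 1 then ofAdd 1 else 1) = _
  by_cases hs : s = cursor u
  · subst hs
    rw [if_pos (show u.pos⁻¹ * ofAdd (cursor u) = 1 from inv_mul_cancel u.pos), Pi.add_apply,
      Pi.single_eq_same]
    rfl
  · rw [if_neg (show ¬u.pos⁻¹ * ofAdd s = 1 from
        fun h => hs (congrArg toAdd (inv_mul_eq_one.mp h)).symm), Pi.add_apply,
      Pi.single_eq_of_ne hs, add_zero, mul_one]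
    rfl

@[simp] lemma cursor_mul_toggle (u : Lamplighter n) : cursor (u * toggle) = cursor u :=
  congrArg toAdd (mul_one u.pos)

lemma move_zero : (move 0 : Lamplighter n) = 1 := rfl

lemma move_add (p q : ZMod n) : (move p * move q : Lamplighter n) = move (p + q) :=
  Wreath.ext (funext fun _ => mul_one _) rfl

lemma move_pow (p : ZMod n) (k : ℕ) : (move p : Lamplighter n) ^ k = move (k • p) := by
  induction k with
  | zero => simp [move_zero]
  | succ k ih => rw [pow_succ, ih, move_add, succ_nsmul]

lemma mem_wreathGens_iff {s : Lamplighter n} :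
    s ∈ wreathGens c2Gens (cycGens n) ↔ s = move 1 ∨ s = move (-1) ∨ s = toggle := by
  constructor
  · rintro (⟨h1, h2 | h2⟩ | ⟨h1, s', rfl, h2⟩)
    · exact Or.inl (Wreath.ext h1 h2)
    · exact Or.inr (Or.inl (Wreath.ext h1 h2))
    · refine Or.inr (Or.inr (Wreath.ext (funext fun z => ?_) h1))
      by_cases hz : z = 1 <;> simp [toggle, h2, hz]
  · rintro (rfl | rfl | rfl)
    · exact Or.inl ⟨rfl, Or.inl rfl⟩
    · exact Or.inl ⟨rfl, Or.inr rfl⟩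
    · refine Or.inr ⟨rfl, ofAdd 1, rfl, funext fun z => ?_⟩
      by_cases hz : z = 1 <;> simp [toggle, hz]

def walkWord (z : ZMod n) : List (Lamplighter n) :=
  List.replicate (cycNorm z) (if 0 ≤ z.valMinAbs then move 1 else move (-1))

lemma walkWord_mem (z : ZMod n) : ∀ s ∈ walkWord z, s ∈ wreathGens c2Gens (cycGens n) := by
  intro s hs
  rw [List.eq_of_mem_replicate hs, mem_wreathGens_iff]
  split_ifs <;> simp

lemma walkWord_prod (z : ZMod n) : (walkWord z).prod = move z := by
  rw [walkWord, List.prod_replicate, apply_ite (· ^ cycNorm z), move_pow, move_pow]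
  conv_rhs => rw [← coe_valMinAbs z]
  split_ifs with h
  · simp [cycNorm, abs_of_nonneg h]
  · simp [cycNorm, abs_of_neg (not_le.mp h)]

def routeWord : ZMod n → List (ZMod n) → ZMod n → List (Lamplighter n)
  | a, [], p => walkWord (p - a)
  | a, q :: Q, p => walkWord (q - a) ++ toggle :: routeWord q Q p

lemma routeWord_mem (a : ZMod n) (Q : List (ZMod n)) (p : ZMod n) :
    ∀ s ∈ routeWord a Q p, s ∈ wreathGens c2Gens (cycGens n) := by
  induction Q generalizing a with
  | nil => exact walkWord_mem _
  | cons q Q ih =>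
    intro s hs
    rcases List.mem_append.mp hs with h | h | ⟨_, h⟩
    · exact walkWord_mem _ s h
    · exact mem_wreathGens_iff.mpr (Or.inr (Or.inr rfl))
    · exact ih q s h

lemma length_routeWord (a : ZMod n) (Q : List (ZMod n)) (p : ZMod n) :
    (routeWord a Q p).length = routeCost a Q p + Q.length := by
  induction Q generalizing a with
  | nil => simp [routeWord, routeCost, walkWord]
  | cons q Q ih =>
    simp only [routeWord, routeCost, List.length_append, List.length_cons, walkWord,
      List.length_replicate, ih]
    omega

lemma mul_prod_routeWord (u : Lamplighter n) (Q : List (ZMod n)) (p : ZMod n) :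
    lamps (u * (routeWord (cursor u) Q p).prod) = lamps u + (fun s => (Q.count s : ZMod 2)) ∧
      cursor (u * (routeWord (cursor u) Q p).prod) = p := by
  induction Q generalizing u with
  | nil => simp [routeWord, walkWord_prod, ← Pi.zero_def]
  | cons q Q ih =>
    have hq : cursor (u * move (q - cursor u) * toggle) = q := by simp
    obtain ⟨h1, h2⟩ := ih (u * move (q - cursor u) * toggle)
    rw [hq] at h1 h2
    simp only [routeWord, List.prod_append, List.prod_cons, walkWord_prod, ← mul_assoc]
    refine ⟨?_, h2⟩
    rw [h1, lamps_mul_toggle]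
    funext s
    simp only [lamps_mul_move, cursor_mul_move, add_sub_cancel, Pi.add_apply, List.count_cons]
    by_cases hs : s = q
    · simp [hs]; ring
    · simp [hs, Ne.symm hs]

def offset (c : ZMod n) (u : Lamplighter n) : ℕ := (cursor u - c).val

def InArc (c : ZMod n) (b : Bool) (t : ℕ) (s : ZMod n) : Prop :=
  if b then n ≤ (s - c).val + t else (s - c).val < t

instance (c : ZMod n) (b : Bool) (t : ℕ) (s : ZMod n) : Decidable (InArc c b t s) := by
  unfold InArc; infer_instance

def arcMask (c : ZMod n) (b : Bool) (t : ℕ) (Y : ZMod n → ZMod 2) : ZMod n → ZMod 2 :=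
  fun s => if InArc c b t s then Y s else 0

def ArcClear (c : ZMod n) (b : Bool) (t : ℕ) (u : Lamplighter n) : Prop :=
  if b then offset c u + t ≤ n else t ≤ offset c u

instance (c : ZMod n) (b : Bool) (t : ℕ) (u : Lamplighter n) :
    Decidable (ArcClear c b t u) := by
  unfold ArcClear; infer_instance

lemma arcMask_add_single {c : ZMod n} {b : Bool} {t : ℕ} {a : ZMod n} (h : ¬InArc c b t a)
    (Y : ZMod n → ZMod 2) (x : ZMod 2) : arcMask c b t (Y + Pi.single a x) = arcMask c b t Y := by
  funext s
  unfold arcMask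
  split_ifs with hs
  · rw [Pi.add_apply, Pi.single_eq_of_ne (by rintro rfl; exact h hs), add_zero]
  · rfl

variable [NeZero n]

local notation "ρ" => wordDist (wreathGens c2Gens (cycGens n))

abbrev CutSpace (n : ℕ) := ZMod n × (Bool × ZMod n) × (ZMod n → ZMod 2)

/-- Cutting the cycle just before `c` turns it into the path `c, c + 1, …, c - 1`.
`feature u (c, (b, tz), ξ)` indicates that the lamps of `u` on the first (`b = false`) or last
(`b = true`) `tz.val + 1` sites of this path form the pattern `ξ` while the cursor lies outside
these sites; for `b = true` the cursor may also sit on the leftmost of them, which is what makes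
a lamp under the cursor visible. -/
noncomputable def feature (u : Lamplighter n) : CutSpace n → ℝ
  | (c, (b, tz), ξ) => if ξ = arcMask c b (tz.val + 1) (lamps u) then
      (if ArcClear c b (tz.val + 1) u then 1 else 0) else 0

noncomputable def arcDiff (u v : Lamplighter n) (c : ZMod n) (p : Bool × ZMod n) : ℝ :=
  ∑ ξ, |feature u (c, p, ξ) - feature v (c, p, ξ)|

noncomputable def cutDiff (u v : Lamplighter n) (c : ZMod n) : ℝ := ∑ p, arcDiff u v c p

lemma sum_abs_feature_sub (u v : Lamplighter n) :
    ∑ ω, |feature u ω - feature v ω| = ∑ c, cutDiff u v c := by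
  simp only [Fintype.sum_prod_type, cutDiff, arcDiff]

section

variable (u v : Lamplighter n) (c : ZMod n) (b : Bool) (tz : ZMod n)

lemma arcDiff_eq : arcDiff u v c (b, tz) =
    if arcMask c b (tz.val + 1) (lamps u) = arcMask c b (tz.val + 1) (lamps v) then
      |(if ArcClear c b (tz.val + 1) u then 1 else 0) -
        if ArcClear c b (tz.val + 1) v then 1 else 0|
    else |(if ArcClear c b (tz.val + 1) u then (1 : ℝ) else 0)| +
      |if ArcClear c b (tz.val + 1) v then (1 : ℝ) else 0| :=
  sum_abs_ite_sub_ite _ _ _ _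

lemma arcDiff_nonneg (p : Bool × ZMod n) : 0 ≤ arcDiff u v c p :=
  Finset.sum_nonneg fun _ _ => abs_nonneg _

lemma arcDiff_le_two (p : Bool × ZMod n) : arcDiff u v c p ≤ 2 := by
  rw [arcDiff_eq]; split_ifs <;> norm_num

variable {u v c b tz}

lemma arcDiff_eq_zero (h : ArcClear c b (tz.val + 1) u ↔ ArcClear c b (tz.val + 1) v)
    (hmask : ArcClear c b (tz.val + 1) u →
      arcMask c b (tz.val + 1) (lamps u) = arcMask c b (tz.val + 1) (lamps v)) :
    arcDiff u v c (b, tz) = 0 := by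
  rw [arcDiff_eq]; split_ifs <;> simp_all

lemma one_le_arcDiff_of_xor
    (h : Xor (ArcClear c b (tz.val + 1) u) (ArcClear c b (tz.val + 1) v)) :
    1 ≤ arcDiff u v c (b, tz) := by
  rw [arcDiff_eq]; rcases h with ⟨hu, hv⟩ | ⟨hv, hu⟩ <;> split_ifs <;> norm_num

lemma one_le_arcDiff_of_inArc {k : ZMod n} (hk : lamps u k ≠ lamps v k)
    (hu : ArcClear c b (tz.val + 1) u) (harc : InArc c b (tz.val + 1) k) :
    1 ≤ arcDiff u v c (b, tz) := by
  have hmask : arcMask c b (tz.val + 1) (lamps u) ≠ arcMask c b (tz.val + 1) (lamps v) :=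
    fun h => hk (by simpa [arcMask, harc] using congrFun h k)
  rw [arcDiff_eq, if_neg hmask, if_pos hu]
  norm_num

end

lemma cutDiff_eq (u v : Lamplighter n) (c : ZMod n) :
    cutDiff u v c = ∑ tz, arcDiff u v c (false, tz) + ∑ tz, arcDiff u v c (true, tz) := by
  rw [cutDiff, Fintype.sum_prod_type, Fintype.sum_bool, add_comm]

lemma offset_lt (c : ZMod n) (u : Lamplighter n) : offset c u < n := ZMod.val_lt _

lemma cycNorm_sub_cursor_le (a c : ZMod n) (u : Lamplighter n) :
    cycNorm (a - cursor u) ≤ Nat.dist (a - c).val (offset c u) := by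
  rw [show a - cursor u = (a - c) - (cursor u - c) by ring]
  exact cycNorm_sub_le_dist _ _

lemma two_mul_cycNorm_le_cutDiff (u v : Lamplighter n) (c : ZMod n) :
    2 * (cycNorm (cursor v - cursor u) : ℝ) ≤ cutDiff u v c := by
  have hu := offset_lt c u
  have hv := offset_lt c v
  have hd : cycNorm (cursor v - cursor u) ≤ Nat.dist (offset c v) (offset c u) :=
    cycNorm_sub_cursor_le (cursor v) c u
  set m := min (offset c u) (offset c v)
  set M := max (offset c u) (offset c v)
  have hfwd := sub_le_sum_of_one_le (fun tz => arcDiff_nonneg u v c (false, tz))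
    (a := m) (b := M) (by omega) fun tz h1 h2 => one_le_arcDiff_of_xor (by
      simp only [Xor, ArcClear, Bool.false_eq_true, if_false]; omega)
  have hbwd := sub_le_sum_of_one_le (fun tz => arcDiff_nonneg u v c (true, tz))
    (a := n - M) (b := n - m) (by omega) fun tz h1 h2 => one_le_arcDiff_of_xor (by
      simp only [Xor, ArcClear, if_true]; omega)
  rw [show n - m - (n - M) = M - m by omega] at hbwd
  have hD : cycNorm (cursor v - cursor u) ≤ M - m := hd.trans (by simp only [Nat.dist]; omega)
  have : (cycNorm (cursor v - cursor u) : ℝ) ≤ ((M - m : ℕ) : ℝ) := by exact_mod_cast hD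
  rw [cutDiff_eq]
  linarith

lemma max_cycNorm_one_le_cutDiff {u v : Lamplighter n} {k : ZMod n} (hk : lamps u k ≠ lamps v k)
    (c : ZMod n) : ((max (cycNorm (k - cursor u)) 1 : ℕ) : ℝ) ≤ cutDiff u v c := by
  have hu := offset_lt c u
  have hkn := ZMod.val_lt (k - c)
  have hd := cycNorm_sub_cursor_le k c u
  simp only [Nat.dist] at hd
  have hfwd := Finset.sum_nonneg fun tz (_ : tz ∈ Finset.univ) => arcDiff_nonneg u v c (false, tz)
  have hbwd := Finset.sum_nonneg fun tz (_ : tz ∈ Finset.univ) => arcDiff_nonneg u v c (true, tz)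
  rw [cutDiff_eq]
  rcases lt_or_ge (k - c).val (offset c u) with hlt | hge
  · have h := sub_le_sum_of_one_le (fun tz => arcDiff_nonneg u v c (false, tz))
      (a := (k - c).val) (b := offset c u) hu.le fun tz h1 h2 => one_le_arcDiff_of_inArc hk
        (by simp only [ArcClear, Bool.false_eq_true, if_false]; omega)
        (by simp only [InArc, Bool.false_eq_true, if_false]; omega)
    have : max (cycNorm (k - cursor u)) 1 ≤ offset c u - (k - c).val := by omega
    have : ((max (cycNorm (k - cursor u)) 1 : ℕ) : ℝ) ≤
        ((offset c u - (k - c).val : ℕ) : ℝ) := by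
      exact_mod_cast this
    linarith
  · have h := sub_le_sum_of_one_le (fun tz => arcDiff_nonneg u v c (true, tz))
      (a := n - (k - c).val - 1) (b := n - offset c u) (by omega) fun tz h1 h2 =>
        one_le_arcDiff_of_inArc hk (by simp only [ArcClear, if_true]; omega)
          (by simp only [InArc, if_true]; omega)
    have : max (cycNorm (k - cursor u)) 1 ≤ n - offset c u - (n - (k - c).val - 1) := by omega
    have : ((max (cycNorm (k - cursor u)) 1 : ℕ) : ℝ) ≤
        ((n - offset c u - (n - (k - c).val - 1) : ℕ) : ℝ) := by
      exact_mod_cast this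
    linarith

lemma cutDiff_comm (u v : Lamplighter n) (c : ZMod n) : cutDiff u v c = cutDiff v u c := by
  simp only [cutDiff, arcDiff, abs_sub_comm]

lemma cutDiff_le_card_mul (u v : Lamplighter n) (c : ZMod n) (S : Finset (Bool × ZMod n))
    (h : ∀ p ∉ S, arcDiff u v c p = 0) : cutDiff u v c ≤ S.card * 2 :=
  sum_le_card_mul_of_eq_zero S (arcDiff_le_two u v c) h

lemma cutDiff_le (u v : Lamplighter n) (c : ZMod n) : cutDiff u v c ≤ 4 * n := by
  have := cutDiff_le_card_mul u v c Finset.univ (by simp)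
  rw [Finset.card_univ, Fintype.card_prod, Fintype.card_bool, ZMod.card] at this
  push_cast at this
  linarith

lemma cutDiff_mul_toggle_le (u : Lamplighter n) (c : ZMod n) : cutDiff u (u * toggle) c ≤ 2 := by
  have hlt := offset_lt c u
  have hoff : offset c (u * toggle) = offset c u := by simp [offset]
  refine (cutDiff_le_card_mul u _ c {(true, ((n - offset c u - 1 : ℕ) : ZMod n))} ?_).trans
    (by simp)
  rintro ⟨b, tz⟩ hp
  refine arcDiff_eq_zero (by simp only [ArcClear, hoff]) fun hu => ?_
  rw [lamps_mul_toggle, arcMask_add_single]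
  cases b
  · simp only [ArcClear, InArc, Bool.false_eq_true, if_false] at hu ⊢
    change ¬offset c u < _; omega
  · have htz : tz.val ≠ n - offset c u - 1 := fun h => hp (by
      rw [Finset.mem_singleton, ← h, ZMod.natCast_zmod_val])
    simp only [ArcClear, InArc, if_true] at hu ⊢
    change ¬n ≤ offset c u + _; omega

lemma cutDiff_le_four_of_lamps_eq {u v : Lamplighter n} (hl : lamps u = lamps v) (c : ZMod n)
    (h : Nat.dist (offset c u) (offset c v) = 1) : cutDiff u v c ≤ 4 := by
  have hu := offset_lt c u
  have hv := offset_lt c v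
  simp only [Nat.dist] at h
  set m := min (offset c u) (offset c v)
  refine (cutDiff_le_card_mul u v c {(false, (m : ZMod n)), (true, ((n - m - 1 : ℕ) : ZMod n))}
    ?_).trans ?_
  · rintro ⟨b, tz⟩ hp
    simp only [Finset.mem_insert, Finset.mem_singleton, Prod.mk.injEq, not_or] at hp
    refine arcDiff_eq_zero ?_ fun _ => by rw [hl]
    cases b
    · have : tz.val ≠ m := fun h' => hp.1 ⟨rfl, by rw [← h', ZMod.natCast_zmod_val]⟩
      simp only [ArcClear, Bool.false_eq_true, if_false]; omega
    · have : tz.val ≠ n - m - 1 := fun h' => hp.2 ⟨rfl, by rw [← h', ZMod.natCast_zmod_val]⟩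
      simp only [ArcClear, if_true]; omega
  · have : (({(false, (m : ZMod n)), (true, ((n - m - 1 : ℕ) : ZMod n))} :
        Finset (Bool × ZMod n)).card : ℝ) ≤ 2 := by
      exact_mod_cast Finset.card_le_two
    linarith

lemma offset_mul_move_one {c : ZMod n} {u : Lamplighter n} (h : c ≠ cursor u + 1) :
    offset c (u * move 1) = offset c u + 1 := by
  have hx : cursor u + 1 - c = ((offset c u + 1 : ℕ) : ZMod n) := by
    simp only [offset, Nat.cast_add, ZMod.natCast_val, ZMod.cast_id', id, Nat.cast_one]; ring
  have hlt : offset c u + 1 < n := by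
    refine lt_of_le_of_ne (offset_lt c u) fun he => h ?_
    rw [he, ZMod.natCast_self, sub_eq_zero] at hx
    exact hx.symm
  simp only [offset, cursor_mul_move]
  rw [hx, ZMod.val_cast_of_lt hlt]
  rfl

lemma sum_cutDiff_mul_move_one_le (u : Lamplighter n) :
    ∑ c, cutDiff u (u * move 1) c ≤ 8 * n := by
  calc ∑ c, cutDiff u (u * move 1) c
      ≤ ∑ c, (4 + if c = cursor u + 1 then 4 * (n : ℝ) else 0) := Finset.sum_le_sum fun c _ => by
        split_ifs with hc
        · linarith [cutDiff_le u (u * move 1) c]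
        · refine (cutDiff_le_four_of_lamps_eq (lamps_mul_move u 1).symm c ?_).trans (by simp)
          rw [offset_mul_move_one hc]
          simp only [Nat.dist]; omega
    _ = 8 * n := by
        rw [Finset.sum_add_distrib, Finset.sum_const, Finset.sum_ite_eq']
        simp; ring

lemma sum_cutDiff_mul_le (u : Lamplighter n) {s : Lamplighter n}
    (hs : s ∈ wreathGens c2Gens (cycGens n)) : ∑ c, cutDiff u (u * s) c ≤ 8 * n := by
  rcases mem_wreathGens_iff.mp hs with rfl | rfl | rfl
  · exact sum_cutDiff_mul_move_one_le u
  · have hu : u * move (-1) * move 1 = u := by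
      rw [mul_assoc, move_add, neg_add_cancel, move_zero, mul_one]
    calc ∑ c, cutDiff u (u * move (-1)) c
        = ∑ c, cutDiff (u * move (-1)) (u * move (-1) * move 1) c := by
          simp only [cutDiff_comm u, hu]
      _ ≤ 8 * n := sum_cutDiff_mul_move_one_le _
  · calc ∑ c, cutDiff u (u * toggle) c ≤ ∑ _c : ZMod n, (2 : ℝ) :=
          Finset.sum_le_sum fun c _ => cutDiff_mul_toggle_le u c
      _ ≤ 8 * n := by simp; linarith

lemma exists_word_length_le_routeCost (u v : Lamplighter n) (Q : List (ZMod n))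
    (hQ : ∀ s, lamps u s ≠ lamps v s → s ∈ Q) :
    ∃ l : List (Lamplighter n), (∀ s ∈ l, s ∈ wreathGens c2Gens (cycGens n)) ∧
      u⁻¹ * v = l.prod ∧ l.length ≤ routeCost (cursor u) Q (cursor v) +
        (Finset.univ.filter fun s => lamps u s ≠ lamps v s).card := by
  set l₀ := (Q.filter fun s => lamps u s ≠ lamps v s).dedup
  have hsub : l₀.Sublist Q := (List.dedup_sublist _).trans List.filter_sublist
  have hmem : ∀ s, s ∈ l₀ ↔ lamps u s ≠ lamps v s := fun s => by
    simpa [l₀] using fun h => hQ s h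
  obtain ⟨hlamps, hcursor⟩ := mul_prod_routeWord u l₀ (cursor v)
  refine ⟨routeWord (cursor u) l₀ (cursor v), routeWord_mem _ _ _, ?_, ?_⟩
  · rw [inv_mul_eq_iff_eq_mul, ext_iff']
    refine ⟨funext fun s => ?_, hcursor.symm⟩
    rw [hlamps, Pi.add_apply]
    have hZ2 : ∀ x y : ZMod 2, x ≠ y → x + 1 = y := by decide
    by_cases hs : lamps u s = lamps v s
    · rw [List.count_eq_zero_of_not_mem ((hmem s).not.mpr (not_not.mpr hs)), hs, Nat.cast_zero,
        add_zero]
    · rw [List.count_eq_one_of_mem (List.nodup_dedup _) ((hmem s).mpr hs), Nat.cast_one]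
      exact (hZ2 _ _ hs).symm
  · rw [length_routeWord]
    gcongr
    · exact routeCost_mono hsub _ _
    · rw [← List.toFinset_card_of_nodup (List.nodup_dedup _)]
      exact Finset.card_le_card fun s hs => by
        simpa using (hmem s).mp (List.mem_toFinset.mp hs)

lemma wordDist_le_of_cycNorm_le (u v : Lamplighter n) (M : ℕ)
    (hM : ∀ s, lamps u s ≠ lamps v s → cycNorm (s - cursor u) ≤ M) :
    ρ u v ≤ 6 * M + 2 + cycNorm (cursor v - cursor u) := by
  set a := cursor u
  set Q := (List.range (3 * M + 1)).map fun s => a + (zigzag M s : ZMod n)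
  have hcover : ∀ s, lamps u s ≠ lamps v s → s ∈ Q := fun s hs => by
    obtain ⟨i, hi, hzig⟩ := exists_zigzag_eq (hM s hs)
    exact List.mem_map.mpr ⟨i, List.mem_range.mpr (by omega), by
      rw [hzig, coe_valMinAbs, add_sub_cancel]⟩
  have hchain : (a :: Q).IsChain fun x y => cycNorm (y - x) ≤ 1 := by
    refine List.isChain_cons.mpr ⟨fun y hy => ?_, ?_⟩
    · simp [Q, List.head?_range] at hy
      simp [← hy, zigzag]
    · refine (List.isChain_map _).mpr ((List.isChain_range _ _).mpr fun m _ => ?_)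
      rw [add_sub_add_left_eq_sub, ← Int.cast_sub, ← natAbs_zigzag_succ_sub M m]
      exact cycNorm_intCast_le _
  have hlast : Q.getLastD a = a - M := by
    simp only [Q, List.getLastD_eq_getLast?, List.getLast?_map, List.getLast?_range,
      Nat.add_one_ne_zero, if_false, Option.map_some, Option.getD_some, Nat.add_sub_cancel]
    rw [show zigzag M (3 * M) = -M by unfold zigzag; split_ifs <;> omega]
    push_cast; ring
  have hcost := routeCost_le_of_isChain a Q (cursor v) hchain
  rw [hlast, List.length_map, List.length_range] at hcost
  have hend : cycNorm (cursor v - (a - (M : ZMod n))) ≤ cycNorm (cursor v - a) + M := by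
    rw [sub_sub_eq_add_sub, add_sub_right_comm]
    exact (cycNorm_add_le _ _).trans (by gcongr; simpa using cycNorm_intCast_le (n := n) M)
  have hcard : (Finset.univ.filter fun s => lamps u s ≠ lamps v s).card ≤ 2 * M + 1 :=
    (Finset.card_le_card fun s hs => Finset.mem_filter.mpr ⟨Finset.mem_univ _,
    hM s (Finset.mem_filter.mp hs).2⟩).trans (card_cycNorm_sub_le a M)
  obtain ⟨l, hl, hprod, hlen⟩ := exists_word_length_le_routeCost u v Q hcover
  have := wordDist_le_length l hl hprod
  change l.length ≤ routeCost a Q (cursor v) + _ at hlen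
  omega

lemma wordDist_le_nine_mul_cutDiff (u v : Lamplighter n) (c : ZMod n) :
    (ρ u v : ℝ) ≤ 9 * cutDiff u v c := by
  have hcursor := two_mul_cycNorm_le_cutDiff u v c
  by_cases h : ∀ k, lamps u k = lamps v k
  · obtain ⟨l, hl, hprod, hlen⟩ := exists_word_length_le_routeCost u v [] fun s hs => absurd (h s) hs
    have : ρ u v ≤ cycNorm (cursor v - cursor u) := (wordDist_le_length l hl hprod).trans
      (by simpa [routeCost, h] using hlen)
    have : (ρ u v : ℝ) ≤ cycNorm (cursor v - cursor u) := by exact_mod_cast this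
    have : (0 : ℝ) ≤ cycNorm (cursor v - cursor u) := Nat.cast_nonneg _
    linarith
  · obtain ⟨k, hk, hmax⟩ := Finset.exists_max_image
      (Finset.univ.filter fun s => lamps u s ≠ lamps v s) (fun s => cycNorm (s - cursor u))
      (by obtain ⟨k, hk⟩ := not_forall.mp h; exact ⟨k, by simpa using hk⟩)
    have hρ := wordDist_le_of_cycNorm_le u v _ fun s hs => hmax s (by simpa using hs)
    have hlamp := max_cycNorm_one_le_cutDiff (Finset.mem_filter.mp hk).2 c
    push_cast at hlamp
    have : (cycNorm (k - cursor u) : ℝ) ≤ max (cycNorm (k - cursor u) : ℝ) 1 := le_max_left _ _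
    have : (1 : ℝ) ≤ max (cycNorm (k - cursor u) : ℝ) 1 := le_max_right _ _
    have : (ρ u v : ℝ) ≤ 6 * cycNorm (k - cursor u) + 2 + cycNorm (cursor v - cursor u) := by
      exact_mod_cast hρ
    linarith

/-- `1 / n` averages over the cut points; `9` is the constant of
`wordDist_le_nine_mul_cutDiff`. -/
noncomputable def embedding (u : Lamplighter n) :
    Lp ℝ 1 (Measure.count : Measure (CutSpace n)) :=
  (9 / n : ℝ) • (MemLp.of_discrete (f := feature u)).toLp (feature u)

lemma norm_embedding_sub (u v : Lamplighter n) :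
    ‖embedding u - embedding v‖ = 9 / n * ∑ c, cutDiff u v c := by
  rw [embedding, embedding, ← smul_sub, norm_smul, ← MemLp.toLp_sub, norm_toLp_count,
    Real.norm_of_nonneg (by positivity)]
  simp only [Pi.sub_apply, sum_abs_feature_sub]

lemma wordDist_le_norm_embedding_sub (u v : Lamplighter n) :
    (ρ u v : ℝ) ≤ ‖embedding u - embedding v‖ := by
  have hn : (0 : ℝ) < n := Nat.cast_pos.mpr (NeZero.pos n)
  have hsum : ∑ _c : ZMod n, (ρ u v : ℝ) ≤ ∑ c, 9 * cutDiff u v c :=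
    Finset.sum_le_sum fun c _ => wordDist_le_nine_mul_cutDiff u v c
  rw [Finset.sum_const, Finset.card_univ, ZMod.card, nsmul_eq_mul, ← Finset.mul_sum] at hsum
  rw [norm_embedding_sub, div_mul_eq_mul_div, le_div_iff₀ hn]
  linarith

lemma norm_embedding_sub_le (u v : Lamplighter n) :
    ‖embedding u - embedding v‖ ≤ 72 * ρ u v := by
  have hn : (0 : ℝ) < n := Nat.cast_pos.mpr (NeZero.pos n)
  refine norm_sub_le_mul_wordDist (fun w s hs => ?_) ?_
  · rw [norm_embedding_sub]
    calc 9 / n * ∑ c, cutDiff w (w * s) c ≤ 9 / n * (8 * n) := by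
          gcongr; exact sum_cutDiff_mul_le w hs
      _ = 72 := by field_simp; ring
  · obtain ⟨l, hl, hprod, -⟩ := exists_word_length_le_routeCost u v Finset.univ.toList (by simp)
    exact ⟨l, hl, hprod⟩

end Lamplighter

/-- The cyclic lamplighter groups `C₂ ≀ C_n` embed into `L₁` with distortion
bounded independently of `n`: there is `D ≥ 1` such that for every `n ≥ 1` there is a map
`f : C₂ ≀ C_n → L₁` with `ρ(u,v) ≤ ‖f(u) − f(v)‖₁ ≤ D·ρ(u,v)` for all `u, v`, where `ρ` is
the word metric of `C₂ ≀ C_n`. -/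
theorem cyclic_lamplighter_embeds_L1 :
    ∃ D : ℝ, 1 ≤ D ∧ ∀ n : ℕ, 1 ≤ n →
      ∃ (Ω : Type) (_ : MeasurableSpace Ω) (μ : Measure Ω)
        (f : Wreath (Multiplicative (ZMod 2)) (Multiplicative (ZMod n)) → Lp ℝ 1 μ),
        ∀ u v : Wreath (Multiplicative (ZMod 2)) (Multiplicative (ZMod n)),
          (wordDist (wreathGens c2Gens (cycGens n)) u v : ℝ) ≤ ‖f u - f v‖ ∧
          ‖f u - f v‖ ≤ D * (wordDist (wreathGens c2Gens (cycGens n)) u v : ℝ) := by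
  refine ⟨72, by norm_num, fun n hn => ?_⟩
  have : NeZero n := ⟨by omega⟩
  exact ⟨_, _, _, Lamplighter.embedding, fun u v =>
    ⟨Lamplighter.wordDist_le_norm_embedding_sub u v, Lamplighter.norm_embedding_sub_le u v⟩⟩
end

section
/- Let G be a group with a finite symmetric generating set S and let (W_t)_{t≥0} be the simple random walk on the Cayley graph of G determined by S. For n ∈ ℕ let X_n = |{0 ≤ k ≤ n : W_k = e}| be the number of visits to the identity up to time n, and let W_{[0,n]} = {W₀, W₁, …, W_n} be the range of the walk. Then for every k ≥ 1 and n ≥ 1, P[|W_{[0,n]}| ≤ k] ≤ k·E[X_n]/n. -/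
/-- The position `W_k = σ₁ ⋯ σ_k` of the walk with steps `σ` after `k` steps. -/
noncomputable def walkAt {G : Type*} [Group G] {n : ℕ} (σ : Fin n → G) (k : ℕ) : G :=
  ((List.ofFn σ).take k).prod

/-- The expectation `E[F(σ₁, …, σ_n)]` of a functional of the first `n` steps of the simple
random walk on the Cayley graph of `G` determined by `S`, where the steps `σ_i` are i.i.d.
uniform on the finite set `S`. -/
noncomputable def pathExp {G : Type*} [Group G] (S : Finset G) (n : ℕ)
    (F : (Fin n → G) → ℝ) : ℝ :=
  (∑ σ : Fin n → {x // x ∈ S}, F fun i => (σ i : G)) / (S.card : ℝ) ^ n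

open Classical in
/-- `X_n`, the number of indices `0 ≤ k ≤ n` with `W_k = e`, as a functional of the steps
`σ₁, …, σ_n` of the walk. -/
noncomputable def visits {G : Type*} [Group G] {n : ℕ} (σ : Fin n → G) : ℕ :=
  ((Finset.range (n + 1)).filter fun k => walkAt σ k = 1).card

open Classical in
/-- `|W_{[0,n]}|`, the number of distinct points visited by the walk up to time `n`, as a
functional of the steps `σ₁, …, σ_n`. -/
noncomputable def rangeCard {G : Type*} [Group G] {n : ℕ} (σ : Fin n → G) : ℕ :=
  ((Finset.range (n + 1)).image fun k => walkAt σ k).card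

open Finset

theorem sum_mul_sum_eq_card_smul_of_dependsOn {ι β R : Type*} [Fintype ι] [DecidableEq ι]
    [Fintype β] [CommSemiring R] {s : Set ι} [DecidablePred (· ∈ s)] {F N : (ι → β) → R}
    (hF : DependsOn F s) (hN : DependsOn N sᶜ) :
    (∑ σ, F σ) * ∑ σ, N σ = Fintype.card (ι → β) • ∑ σ, F σ * N σ := by
  -- exchanging the coordinates outside `s` between two paths is an involution of pairs of paths
  let swap : (ι → β) × (ι → β) → (ι → β) × (ι → β) :=
    fun p => (s.piecewise p.1 p.2, s.piecewise p.2 p.1)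
  have hswap : Function.Involutive swap := by
    rintro ⟨σ, τ⟩
    ext i <;> by_cases hi : i ∈ s <;> simp [swap, hi]
  calc (∑ σ, F σ) * ∑ σ, N σ = ∑ p : (ι → β) × (ι → β), F p.1 * N p.2 := by
        rw [sum_mul_sum, Fintype.sum_prod_type]
    _ = ∑ p : (ι → β) × (ι → β), F (swap p).1 * N (swap p).2 :=
        (Equiv.sum_comp hswap.toPerm fun p => F p.1 * N p.2).symm
    _ = ∑ p : (ι → β) × (ι → β), F p.1 * N p.1 := by
        refine Fintype.sum_congr _ _ fun p => ?_
        rw [hF (x := (swap p).1) (y := p.1) fun i hi => by simp [swap, hi],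
          hN (x := (swap p).2) (y := p.1) fun i hi => by simp_all [swap]]
    _ = Fintype.card (ι → β) • ∑ σ, F σ * N σ := by
        rw [Fintype.sum_prod_type, ← sum_nsmul]
        simp

section PathExp

variable {G : Type*} [Group G] {S : Finset G} {n : ℕ}

theorem pathExp_mono {F F' : (Fin n → G) → ℝ} (h : ∀ σ, F σ ≤ F' σ) :
    pathExp S n F ≤ pathExp S n F' :=
  div_le_div_of_nonneg_right (sum_le_sum fun σ _ => h _) (by positivity)

theorem pathExp_nonneg {F : (Fin n → G) → ℝ} (h : ∀ σ, 0 ≤ F σ) : 0 ≤ pathExp S n F :=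
  div_nonneg (sum_nonneg fun σ _ => h _) (by positivity)

theorem pathExp_const_le {a : ℝ} (ha : 0 ≤ a) : pathExp S n (fun _ => a) ≤ a := by
  rcases eq_or_ne ((S.card : ℝ) ^ n) 0 with h | h
  · simp [pathExp, h, ha]
  · simp [pathExp, h]

theorem pathExp_const_mul (a : ℝ) (F : (Fin n → G) → ℝ) :
    pathExp S n (fun σ => a * F σ) = a * pathExp S n F := by
  simp only [pathExp, ← mul_sum, mul_div_assoc]

theorem pathExp_sum {ι : Type*} (s : Finset ι) (F : ι → (Fin n → G) → ℝ) :
    pathExp S n (fun σ => ∑ j ∈ s, F j σ) = ∑ j ∈ s, pathExp S n (F j) := by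
  simp only [pathExp, sum_div]
  exact sum_comm

theorem pathExp_comp_perm (e : Equiv.Perm (Fin n)) (F : (Fin n → G) → ℝ) :
    pathExp S n (fun σ => F (σ ∘ e)) = pathExp S n F := by
  unfold pathExp
  congr 1
  exact Equiv.sum_comp (e.symm.arrowCongr (Equiv.refl _))
    fun σ : Fin n → {x // x ∈ S} => F fun i => (σ i : G)

theorem pathExp_mul_of_dependsOn {s : Set (Fin n)} [DecidablePred (· ∈ s)]
    {F N : (Fin n → G) → ℝ} (hF : DependsOn F s) (hN : DependsOn N sᶜ) :
    pathExp S n (fun σ => F σ * N σ) = pathExp S n F * pathExp S n N := by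
  have hsum := sum_mul_sum_eq_card_smul_of_dependsOn (s := s) (β := {x // x ∈ S})
    (F := fun σ => F fun i => (σ i : G)) (N := fun σ => N fun i => (σ i : G))
    (fun σ τ h => hF fun i hi => by simp [h i hi]) (fun σ τ h => hN fun i hi => by simp [h i hi])
  rw [Fintype.card_fun, Fintype.card_coe, Fintype.card_fin, nsmul_eq_mul] at hsum
  push_cast at hsum
  rcases eq_or_ne ((S.card : ℝ) ^ n) 0 with h | h
  · simp [pathExp, h]
  · simp only [pathExp]
    rw [div_mul_div_comm, hsum]
    field_simp

end PathExp

section Walk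

open Classical

variable {G : Type*} [Group G] {n : ℕ}

theorem walkAt_zero (σ : Fin n → G) : walkAt σ 0 = 1 := by
  simp [walkAt]

theorem walkAt_succ (σ : Fin n → G) {t : ℕ} (ht : t < n) :
    walkAt σ (t + 1) = walkAt σ t * σ ⟨t, ht⟩ := by
  simp [walkAt, List.prod_take_succ _ _ (by simpa using ht : t < (List.ofFn σ).length)]

theorem walkAt_comp_addRight [NeZero n] (σ : Fin n → G) {j u : ℕ} (h : j + u ≤ n) :
    walkAt (σ ∘ Equiv.addRight (Fin.ofNat n j)) u = (walkAt σ j)⁻¹ * walkAt σ (j + u) := by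
  induction u with
  | zero => simp [walkAt_zero]
  | succ u ih =>
    have hu : u < n := by omega
    rw [walkAt_succ _ hu, ih (by omega), ← add_assoc, walkAt_succ σ (by omega), mul_assoc]
    congr 2
    simp only [Function.comp_apply, Equiv.coe_addRight]
    congr 1
    ext
    rw [Fin.val_add, Fin.val_ofNat, Nat.mod_eq_of_lt (by omega : j < n),
      Nat.mod_eq_of_lt (by omega : u + j < n)]
    simp [add_comm]

theorem walkAt_congr {σ τ : Fin n → G} {t : ℕ} (h : ∀ i : Fin n, (i : ℕ) < t → σ i = τ i) :
    walkAt σ t = walkAt τ t := by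
  unfold walkAt
  congr 1
  apply List.ext_getElem (by simp)
  intro i hσ _
  simp only [List.length_take, List.length_ofFn, lt_min_iff] at hσ
  simpa using h ⟨i, hσ.2⟩ hσ.1

noncomputable def rangeUpTo (σ : Fin n → G) (j : ℕ) : Finset G :=
  (range (j + 1)).image (walkAt σ)

def IsFirstVisit (σ : Fin n → G) (j : ℕ) : Prop :=
  ∀ t < j, walkAt σ t ≠ walkAt σ j

noncomputable def returnCount (σ : Fin n → G) (j : ℕ) : ℕ :=
  #{t ∈ Icc j n | walkAt σ t = walkAt σ j}

def IsFirstVisitWithin (k : ℕ) (σ : Fin n → G) (j : ℕ) : Prop :=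
  IsFirstVisit σ j ∧ #(rangeUpTo σ j) ≤ k

theorem rangeUpTo_mono (σ : Fin n → G) {i j : ℕ} (h : i ≤ j) : rangeUpTo σ i ⊆ rangeUpTo σ j :=
  image_subset_image (range_subset_range.2 (by omega))

theorem injOn_walkAt_setOf_isFirstVisit (σ : Fin n → G) :
    Set.InjOn (walkAt σ) {j | IsFirstVisit σ j} := by
  intro i hi j hj hij
  by_contra hne
  rcases lt_or_gt_of_ne hne with hlt | hlt
  · exact hj i hlt hij
  · exact hi j hlt hij.symm

theorem succ_le_sum_returnCount (σ : Fin n → G) :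
    n + 1 ≤ ∑ j ∈ range (n + 1) with IsFirstVisit σ j, returnCount σ j := by
  -- every time `t` is a return to the site first visited at the time `j ≤ t`
  have hcover : range (n + 1) ⊆ {j ∈ range (n + 1) | IsFirstVisit σ j}.biUnion
      fun j => {t ∈ Icc j n | walkAt σ t = walkAt σ j} := by
    intro t ht
    have hex : ∃ j, walkAt σ j = walkAt σ t := ⟨t, rfl⟩
    have hle : Nat.find hex ≤ t := Nat.find_le rfl
    simp only [mem_range] at ht
    simp only [mem_biUnion, mem_filter, mem_range, mem_Icc]
    refine ⟨Nat.find hex, ⟨by omega, fun s hs => ?_⟩, ⟨hle, by omega⟩, (Nat.find_spec hex).symm⟩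
    rw [Nat.find_spec hex]
    exact Nat.find_min hex hs
  calc n + 1 = #(range (n + 1)) := (card_range _).symm
    _ ≤ _ := card_le_card hcover
    _ ≤ _ := card_biUnion_le

theorem card_filter_isFirstVisitWithin_le (σ : Fin n → G) (k : ℕ) :
    #{j ∈ range (n + 1) | IsFirstVisitWithin k σ j} ≤ k := by
  set J := {j ∈ range (n + 1) | IsFirstVisitWithin k σ j}
  rcases J.eq_empty_or_nonempty with hJ | hJ
  · simp [hJ]
  have hinj : Set.InjOn (walkAt σ) J :=
    (injOn_walkAt_setOf_isFirstVisit σ).mono fun j hj => (mem_filter.1 hj).2.1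
  have hsub : J.image (walkAt σ) ⊆ rangeUpTo σ (J.max' hJ) :=
    image_subset_image fun j hj => mem_range.2 (Nat.lt_succ_of_le (J.le_max' j hj))
  calc #J = #(J.image (walkAt σ)) := (card_image_of_injOn hinj).symm
    _ ≤ #(rangeUpTo σ (J.max' hJ)) := card_le_card hsub
    _ ≤ k := (mem_filter.1 (J.max'_mem hJ)).2.2

theorem isFirstVisitWithin_congr {σ τ : Fin n → G} {k j : ℕ}
    (h : ∀ t ≤ j, walkAt σ t = walkAt τ t) :
    IsFirstVisitWithin k σ j ↔ IsFirstVisitWithin k τ j := by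
  have hrange : rangeUpTo σ j = rangeUpTo τ j :=
    image_congr fun t ht => h t (Nat.le_of_lt_succ (mem_range.1 ht))
  unfold IsFirstVisitWithin IsFirstVisit
  rw [hrange]
  constructor <;> rintro ⟨hfirst, hk⟩ <;> refine ⟨fun t ht => ?_, hk⟩
  · rw [← h t ht.le, ← h j le_rfl]; exact hfirst t ht
  · rw [h t ht.le, h j le_rfl]; exact hfirst t ht

theorem dependsOn_isFirstVisitWithin (k j : ℕ) :
    DependsOn (fun σ : Fin n → G => IsFirstVisitWithin k σ j) {i | (i : ℕ) < j} :=
  fun σ τ h => propext <| isFirstVisitWithin_congr fun t ht =>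
    walkAt_congr fun i hi => h i (show (i : ℕ) < j by omega)

theorem returnCount_eq_card_comp_addRight [NeZero n] (σ : Fin n → G) {j : ℕ} (hj : j ≤ n) :
    returnCount σ j =
      #{u ∈ range (n - j + 1) | walkAt (σ ∘ Equiv.addRight (Fin.ofNat n j)) u = 1} := by
  refine card_nbij' (fun t => t - j) (fun u => j + u) ?_ ?_ ?_ ?_
  · intro t ht
    simp only [coe_filter, mem_Icc, Set.mem_ofPred_eq, mem_range] at ht ⊢
    rw [walkAt_comp_addRight σ (by omega), Nat.add_sub_cancel' ht.1.1, ht.2, inv_mul_cancel]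
    exact ⟨by omega, rfl⟩
  · intro u hu
    simp only [coe_filter, mem_Icc, Set.mem_ofPred_eq, mem_range] at hu ⊢
    rw [walkAt_comp_addRight σ (by omega), inv_mul_eq_one] at hu
    exact ⟨⟨by omega, by omega⟩, hu.2.symm⟩
  · intro t ht
    simp only [coe_filter, mem_Icc, Set.mem_ofPred_eq] at ht
    simp only
    omega
  · intro u _
    simp

theorem returnCount_le_visits_comp_addRight [NeZero n] (σ : Fin n → G) {j : ℕ} (hj : j ≤ n) :
    returnCount σ j ≤ visits (σ ∘ Equiv.addRight (Fin.ofNat n j)) := by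
  rw [returnCount_eq_card_comp_addRight σ hj]
  exact card_le_card (filter_subset_filter _ (range_subset_range.2 (by omega)))

theorem dependsOn_returnCount [NeZero n] {j : ℕ} (hj : j ≤ n) :
    DependsOn (fun σ : Fin n → G => returnCount σ j) {i | (i : ℕ) < j}ᶜ := by
  intro σ τ h
  simp only [returnCount_eq_card_comp_addRight _ hj]
  refine congrArg card (filter_congr fun u hu => ?_)
  rw [walkAt_congr fun i hi => ?_]
  have hij : (i : ℕ) + j < n := by simp only [mem_range] at hu; omega
  refine h _ ?_
  simp [Fin.val_add, Nat.mod_eq_of_lt (show j < n by omega), Nat.mod_eq_of_lt hij]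

theorem sum_indicator_isFirstVisitWithin_le (σ : Fin n → G) (k : ℕ) :
    ∑ j ∈ range (n + 1), (if IsFirstVisitWithin k σ j then (1 : ℝ) else 0) ≤ k := by
  rw [sum_boole]
  exact_mod_cast card_filter_isFirstVisitWithin_le σ k

theorem succ_mul_indicator_le_sum_mul_returnCount (σ : Fin n → G) (k : ℕ) :
    ((n : ℝ) + 1) * (if rangeCard σ ≤ k then 1 else 0) ≤
      ∑ j ∈ range (n + 1), (if IsFirstVisitWithin k σ j then (1 : ℝ) else 0) * returnCount σ j := by
  split_ifs with hσ
  · have hwithin : ∀ j ∈ range (n + 1), IsFirstVisitWithin k σ j ↔ IsFirstVisit σ j :=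
      fun j hj => and_iff_left <|
        (card_le_card (rangeUpTo_mono σ (Nat.le_of_lt_succ (mem_range.1 hj)))).trans hσ
    simp only [ite_mul, one_mul, zero_mul, mul_one]
    rw [← sum_filter, filter_congr hwithin]
    exact_mod_cast succ_le_sum_returnCount σ
  · simp only [mul_zero]
    exact sum_nonneg fun j _ => by positivity

end Walk

section Expectation

open Classical

variable {G : Type*} [Group G] {S : Finset G} {n : ℕ}

theorem succ_mul_pathExp_rangeCard_le [NeZero n] (k : ℕ) :
    ((n : ℝ) + 1) * pathExp S n (fun σ => if rangeCard σ ≤ k then (1 : ℝ) else 0) ≤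
      ∑ j ∈ range (n + 1), pathExp S n (fun σ => if IsFirstVisitWithin k σ j then (1 : ℝ) else 0) *
        pathExp S n (fun σ => (returnCount σ j : ℝ)) := by
  have hfactor : ∀ j ∈ range (n + 1),
      pathExp S n (fun σ => (if IsFirstVisitWithin k σ j then (1 : ℝ) else 0) * returnCount σ j) =
        pathExp S n (fun σ => if IsFirstVisitWithin k σ j then (1 : ℝ) else 0) *
          pathExp S n (fun σ => (returnCount σ j : ℝ)) := fun j hj =>
    pathExp_mul_of_dependsOn (s := {i | (i : ℕ) < j})
      (fun σ τ h => by simp only [dependsOn_isFirstVisitWithin k j h])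
      (fun σ τ h => by simp only [dependsOn_returnCount (Nat.le_of_lt_succ (mem_range.1 hj)) h])
  rw [← pathExp_const_mul, ← sum_congr rfl hfactor, ← pathExp_sum]
  exact pathExp_mono fun σ => succ_mul_indicator_le_sum_mul_returnCount σ k

theorem pathExp_returnCount_le_pathExp_visits [NeZero n] {j : ℕ} (hj : j ≤ n) :
    pathExp S n (fun σ => (returnCount σ j : ℝ)) ≤ pathExp S n (fun σ => (visits σ : ℝ)) :=
  calc pathExp S n (fun σ => (returnCount σ j : ℝ))
      ≤ pathExp S n (fun σ => (visits (σ ∘ Equiv.addRight (Fin.ofNat n j)) : ℝ)) :=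
        pathExp_mono fun σ => by exact_mod_cast returnCount_le_visits_comp_addRight σ hj
    _ = pathExp S n (fun σ => (visits σ : ℝ)) := pathExp_comp_perm _ fun σ => (visits σ : ℝ)

theorem sum_pathExp_isFirstVisitWithin_le (k : ℕ) :
    ∑ j ∈ range (n + 1), pathExp S n (fun σ => if IsFirstVisitWithin k σ j then (1 : ℝ) else 0) ≤
      k := by
  rw [← pathExp_sum]
  exact (pathExp_mono fun σ => sum_indicator_isFirstVisitWithin_le σ k).trans
    (pathExp_const_le k.cast_nonneg)

end Expectation

theorem range_lower_bound_general
    {G : Type*} [Group G] (S : Finset G)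
    (k n : ℕ) (hn : 1 ≤ n) :
    pathExp S n (fun σ => if rangeCard σ ≤ k then (1 : ℝ) else 0) ≤
      k * (pathExp S n fun σ => (visits σ : ℝ)) / n := by
  classical
  have : NeZero n := ⟨by omega⟩
  set P := pathExp S n (fun σ => if rangeCard σ ≤ k then (1 : ℝ) else 0)
  set V := pathExp S n fun σ => (visits σ : ℝ)
  set E : ℕ → ℝ := fun j => pathExp S n fun σ => if IsFirstVisitWithin k σ j then (1 : ℝ) else 0
  have hP : 0 ≤ P := pathExp_nonneg fun σ => by positivity
  rw [le_div_iff₀ (by exact_mod_cast hn)]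
  calc P * n ≤ (n + 1) * P := by nlinarith
    _ ≤ ∑ j ∈ range (n + 1), E j * pathExp S n (fun σ => (returnCount σ j : ℝ)) :=
        succ_mul_pathExp_rangeCard_le k
    _ ≤ ∑ j ∈ range (n + 1), E j * V := sum_le_sum fun j hj =>
        mul_le_mul_of_nonneg_left
          (pathExp_returnCount_le_pathExp_visits (Nat.le_of_lt_succ (mem_range.1 hj)))
          (pathExp_nonneg fun σ => by positivity)
    _ = (∑ j ∈ range (n + 1), E j) * V := (sum_mul _ _ _).symm
    _ ≤ k * V := mul_le_mul_of_nonneg_right (sum_pathExp_isFirstVisitWithin_le k)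
        (pathExp_nonneg fun σ => by positivity)

/-- For every `k ≥ 1` and `n ≥ 1`, the range of the simple random walk
satisfies `P[|W_{[0,n]}| ≤ k] ≤ k·E[X_n]/n`, where `X_n` is the number of visits to the
identity up to time `n`. -/
theorem range_lower_bound
    {G : Type*} [Group G] (S : Finset G) (hS : IsSymmGenSet (S : Set G))
    (k n : ℕ) (hk : 1 ≤ k) (hn : 1 ≤ n) :
    pathExp S n (fun σ => if rangeCard σ ≤ k then (1 : ℝ) else 0) ≤
      k * (pathExp S n fun σ => (visits σ : ℝ)) / n :=
  range_lower_bound_general S k n hn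
end
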